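/- arXiv:1301.6285 — 9 statements merged into one kernel-verified Lean document; each statement's English description precedes it below -/
import Mathlib

section
/- Let p be a prime and α a positive integer not divisible by p. If p^e > 4, then u((α·p^(e-1))!) ≡ (-1)^(p·α) · u((α·p^e)!) (mod p^e), where u(n) = n / p^(ν_p(n)) denotes the unit part of n. -/
/-- The unit part of `n` with respect to `p`: `n / p^(ν_p(n))`. -/
def unitPart (p n : ℕ) : ℕ := n / p ^ (padicValNat p n)

/-!
Removing the multiples of `p` from `(p m)!` leaves `m!` times powers of `p` times the product of
the integers below `p m` prime to `p`. For `m = α p^(e-1)` these integers run `α` times through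
the units of `ZMod (p^e)`, whose product is `(-1)^p` by Gauss's generalization of Wilson's theorem:
pairing each unit with its inverse leaves the square roots of `1`, which are `±1` for odd `p` and
`±1, 2^(e-1) ± 1` for `p = 2`, `e ≥ 3`.
-/

open Finset
open scoped Nat

theorem Nat.ordCompl_prod {ι : Type*} (s : Finset ι) (f : ι → ℕ) (p : ℕ) :
    ordCompl[p] (∏ i ∈ s, f i) = ∏ i ∈ s, ordCompl[p] (f i) := by
  classical
  induction s using Finset.induction_on with
  | empty => simp
  | insert i s hi ih => rw [prod_insert hi, prod_insert hi, Nat.ordCompl_mul, ih]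

theorem Finset.prod_Ioc_filter_dvd {M : Type*} [CommMonoid M] (f : ℕ → M) {p : ℕ} (hp : 0 < p)
    (m : ℕ) : ∏ k ∈ Ioc 0 (p * m) with p ∣ k, f k = ∏ j ∈ Ioc 0 m, f (p * j) := by
  symm
  refine prod_nbij' (p * ·) (· / p) (fun j hj => ?_) (fun k hk => ?_) (fun j _ => ?_)
    (fun k hk => ?_) (fun _ _ => rfl)
  · simp only [mem_filter, mem_Ioc] at hj ⊢
    exact ⟨⟨Nat.mul_pos hp hj.1, Nat.mul_le_mul_left p hj.2⟩, dvd_mul_right p j⟩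
  · simp only [mem_filter, mem_Ioc] at hk ⊢
    exact ⟨Nat.div_pos (Nat.le_of_dvd hk.1.1 hk.2) hp, Nat.div_le_of_le_mul hk.1.2⟩
  · exact Nat.mul_div_cancel_left j hp
  · exact Nat.mul_div_cancel' (mem_filter.1 hk).2

theorem Nat.factorial_eq_prod_Ioc (n : ℕ) : n ! = ∏ k ∈ Ioc 0 n, k := by
  rw [← Finset.Ico_add_one_add_one_eq_Ioc, zero_add, prod_Ico_id_eq_factorial]

theorem Nat.ordCompl_factorial_mul {p : ℕ} (hp : p.Prime) (m : ℕ) :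
    ordCompl[p] (p * m)! = ordCompl[p] m ! * ∏ k ∈ range (p * m) with ¬p ∣ k, k := by
  have hfilter : {k ∈ Ioc 0 (p * m) | ¬p ∣ k} = {k ∈ range (p * m) | ¬p ∣ k} := by
    ext k
    simp only [mem_filter, mem_Ioc, mem_range]
    constructor
    · rintro ⟨⟨-, hk⟩, hpk⟩
      exact ⟨lt_of_le_of_ne hk (by rintro rfl; exact hpk (dvd_mul_right p m)), hpk⟩
    · rintro ⟨hk, hpk⟩
      exact ⟨⟨Nat.pos_of_ne_zero (by rintro rfl; exact hpk (dvd_zero p)), hk.le⟩, hpk⟩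
  rw [factorial_eq_prod_Ioc, factorial_eq_prod_Ioc, ordCompl_prod, ordCompl_prod,
    ← prod_filter_mul_prod_filter_not (Ioc 0 (p * m)) (p ∣ ·), prod_Ioc_filter_dvd _ hp.pos,
    hfilter]
  congr 1
  · refine prod_congr rfl fun j _ => ?_
    simpa using Nat.ordCompl_self_pow_mul j 1 hp
  · refine prod_congr rfl fun k hk => ?_
    rw [Nat.factorization_eq_zero_of_not_dvd (mem_filter.1 hk).2, pow_zero, Nat.div_one]

theorem unitPart_eq_ordCompl {p : ℕ} (hp : p.Prime) (n : ℕ) : unitPart p n = ordCompl[p] n := by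
  rw [unitPart, Nat.factorization_def n hp]

theorem Function.Periodic.prod_range_mul {M : Type*} [CommMonoid M] {f : ℕ → M} {N : ℕ}
    (hf : Function.Periodic f N) (a : ℕ) :
    ∏ k ∈ range (a * N), f k = (∏ k ∈ range N, f k) ^ a := by
  induction a with
  | zero => simp
  | succ a ih =>
    rw [add_mul, one_mul, prod_range_add, ih, pow_succ]
    congr 1
    exact prod_congr rfl fun k _ => by rw [add_comm]; exact hf.nat_mul a k

theorem ZMod.prod_range_natCast {M : Type*} [CommMonoid M] (N : ℕ) [NeZero N]
    (g : ZMod N → M) : ∏ k ∈ range N, g k = ∏ x, g x :=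
  prod_nbij' (↑) ZMod.val (by simp) (by simp [ZMod.val_lt])
    (fun k hk => ZMod.val_cast_of_lt (mem_range.1 hk)) (fun x _ => ZMod.natCast_zmod_val x)
    (fun _ _ => rfl)

theorem prod_units_eq_prod_filter_isUnit {M : Type*} [CommMonoid M] [Fintype M]
    [DecidableEq M] : ∏ u : Mˣ, (u : M) = ∏ x with IsUnit x, x :=
  prod_nbij (↑) (by simp) (fun u _ v _ h => Units.ext h)
    (fun x hx => ⟨(mem_filter.1 hx).2.unit, by simp, rfl⟩) (fun _ _ => rfl)

theorem ZMod.prod_range_mul_filter_isUnit (N a : ℕ) [NeZero N] :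
    ∏ k ∈ range (a * N) with IsUnit ((k : ℕ) : ZMod N), (k : ZMod N) =
      (∏ u : (ZMod N)ˣ, (u : ZMod N)) ^ a := by
  have hf : Function.Periodic
      (fun k : ℕ => if IsUnit (k : ZMod N) then (k : ZMod N) else 1) N := fun k => by simp
  rw [prod_filter, hf.prod_range_mul,
    ZMod.prod_range_natCast N (fun x => if IsUnit x then x else 1), ← prod_filter,
    prod_units_eq_prod_filter_isUnit]

theorem ZMod.isUnit_natCast_prime_pow_iff {p e k : ℕ} (hp : p.Prime) (he : e ≠ 0) :
    IsUnit (k : ZMod (p ^ e)) ↔ ¬p ∣ k := by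
  rw [ZMod.isUnit_iff_coprime, Nat.coprime_pow_right_iff (Nat.pos_of_ne_zero he),
    Nat.coprime_comm, hp.coprime_iff_not_dvd]

theorem Finset.prod_univ_eq_prod_filter_sq_eq_one {G : Type*} [CommGroup G] [Fintype G]
    [DecidableEq G] : ∏ g : G, g = ∏ g with g ^ 2 = 1, g := by
  have : ∏ g : G with ¬g ^ 2 = 1, g = 1 := by
    refine prod_involution (fun g _ => g⁻¹) (fun g _ => mul_inv_cancel g) (fun g hg _ h => ?_)
      (by simp) (fun g _ => inv_inv g)
    refine (mem_filter.1 hg).2 ?_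
    rw [sq]
    nth_rewrite 2 [← h]
    exact mul_inv_cancel g
  rw [← prod_filter_mul_prod_filter_not univ (fun g : G => g ^ 2 = 1), this, mul_one]

theorem prod_units_eq_prod_filter_sq_eq_one {M : Type*} [CommMonoid M] [Fintype M]
    [DecidableEq M] : ∏ u : Mˣ, (u : M) = ∏ x with x ^ 2 = 1, x := by
  rw [← Units.coe_prod, prod_univ_eq_prod_filter_sq_eq_one, Units.coe_prod]
  refine prod_nbij (↑) (fun u hu => ?_) (fun u _ v _ h => Units.ext h) (fun x hx => ?_)
    (fun _ _ => rfl)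
  · rw [mem_filter, Units.ext_iff, Units.val_pow_eq_pow_val] at hu
    simpa using hu.2
  · rw [coe_filter] at hx
    refine ⟨(IsUnit.of_pow_eq_one hx.2 two_ne_zero).unit, ?_, rfl⟩
    simp [Units.ext_iff, hx.2]

theorem Int.pow_dvd_sub_one_or_pow_dvd_add_one {p e : ℕ} (hp : p.Prime) (hp2 : p ≠ 2)
    {a : ℤ} (h : (p : ℤ) ^ e ∣ (a - 1) * (a + 1)) :
    (p : ℤ) ^ e ∣ a - 1 ∨ (p : ℤ) ^ e ∣ a + 1 := by
  have hpZ : Prime (p : ℤ) := Nat.prime_iff_prime_int.mp hp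
  by_cases ha : (p : ℤ) ∣ a - 1
  · refine .inl (hpZ.pow_dvd_of_dvd_mul_right e (fun ha' => hp2 ?_) h)
    have : (p : ℤ) ∣ 2 := by simpa using dvd_sub ha' ha
    exact (Nat.prime_dvd_prime_iff_eq hp Nat.prime_two).mp (by exact_mod_cast this)
  · exact .inr (hpZ.pow_dvd_of_dvd_mul_left e ha h)

theorem Int.two_pow_dvd_sub_one_or_two_pow_dvd_add_one {e : ℕ} {a : ℤ}
    (h : (2 : ℤ) ^ (e + 2) ∣ (a - 1) * (a + 1)) :
    2 ^ (e + 1) ∣ a - 1 ∨ 2 ^ (e + 1) ∣ a + 1 := by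
  obtain ⟨s, rfl⟩ : ∃ s, a = 2 * s + 1 := by
    have h2 : (2 : ℤ) ∣ (a - 1) * (a + 1) := (dvd_pow_self 2 (by omega)).trans h
    rcases Int.prime_two.dvd_mul.mp h2 with h2 | h2 <;> exact ⟨(a - 1) / 2, by omega⟩
  have hs : (2 : ℤ) ^ e ∣ s * (s + 1) := by
    rw [pow_add, show (2 * s + 1 - 1) * (2 * s + 1 + 1) = s * (s + 1) * 2 ^ 2 by ring] at h
    exact (mul_dvd_mul_iff_right (by norm_num)).mp h
  rw [pow_succ', show 2 * s + 1 - 1 = 2 * s by ring, show 2 * s + 1 + 1 = 2 * (s + 1) by ring,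
    mul_dvd_mul_iff_left two_ne_zero, mul_dvd_mul_iff_left two_ne_zero]
  by_cases h2s : (2 : ℤ) ∣ s
  · exact .inl (Int.prime_two.pow_dvd_of_dvd_mul_right e (by omega) hs)
  · exact .inr (Int.prime_two.pow_dvd_of_dvd_mul_left e h2s hs)

theorem ZMod.exists_intCast_of_sq_eq_one {N : ℕ} {x : ZMod N} (hx : x ^ 2 = 1) :
    ∃ a : ℤ, (N : ℤ) ∣ (a - 1) * (a + 1) ∧ x = a := by
  obtain ⟨a, rfl⟩ := ZMod.intCast_surjective x
  refine ⟨a, (ZMod.intCast_zmod_eq_zero_iff_dvd _ N).mp ?_, rfl⟩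
  push_cast
  linear_combination hx

theorem ZMod.sq_eq_one_iff_of_odd_prime_pow {p e : ℕ} (hp : p.Prime) (hp2 : p ≠ 2)
    {x : ZMod (p ^ e)} : x ^ 2 = 1 ↔ x = 1 ∨ x = -1 := by
  refine ⟨fun hx => ?_, by rintro (rfl | rfl) <;> simp⟩
  obtain ⟨a, ha, rfl⟩ := ZMod.exists_intCast_of_sq_eq_one hx
  push_cast at ha
  rcases Int.pow_dvd_sub_one_or_pow_dvd_add_one hp hp2 ha with h | h
  · left
    simpa using ((ZMod.intCast_eq_intCast_iff_dvd_sub 1 a _).mpr (by exact_mod_cast h)).symm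
  · right
    simpa using ((ZMod.intCast_eq_intCast_iff_dvd_sub (-1) a _).mpr (by simpa using h)).symm

theorem ZMod.two_pow_mul_intCast_eq_zero_or_eq {e : ℕ} (t : ℤ) :
    (2 ^ (e + 1) * t : ZMod (2 ^ (e + 2))) = 0 ∨
      (2 ^ (e + 1) * t : ZMod (2 ^ (e + 2))) = 2 ^ (e + 1) := by
  have hN : (2 : ZMod (2 ^ (e + 2))) ^ (e + 2) = 0 := by
    exact_mod_cast ZMod.natCast_self (2 ^ (e + 2))
  rcases Int.even_or_odd' t with ⟨r, rfl | rfl⟩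
  · left; push_cast; linear_combination r * hN
  · right; push_cast; linear_combination r * hN

theorem ZMod.sq_eq_one_iff_of_two_pow {e : ℕ} {x : ZMod (2 ^ (e + 2))} :
    x ^ 2 = 1 ↔ x = 1 ∨ x = -1 ∨ x = 2 ^ (e + 1) + 1 ∨ x = 2 ^ (e + 1) - 1 := by
  have hN : (2 : ZMod (2 ^ (e + 2))) ^ (e + 2) = 0 := by
    exact_mod_cast ZMod.natCast_self (2 ^ (e + 2))
  constructor
  · intro hx
    obtain ⟨a, ha, rfl⟩ := ZMod.exists_intCast_of_sq_eq_one hx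
    push_cast at ha
    rcases Int.two_pow_dvd_sub_one_or_two_pow_dvd_add_one ha with ⟨t, ht⟩ | ⟨t, ht⟩
    · rw [show a = 1 + 2 ^ (e + 1) * t by linarith]
      push_cast
      rcases ZMod.two_pow_mul_intCast_eq_zero_or_eq (e := e) t with h | h <;> simp [h, add_comm]
    · rw [show a = -1 + 2 ^ (e + 1) * t by linarith]
      push_cast
      rcases ZMod.two_pow_mul_intCast_eq_zero_or_eq (e := e) t with h | h
      · simp [h]
      · simp [h, sub_eq_neg_add]
  · rintro (rfl | rfl | rfl | rfl)
    · simp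
    · simp
    · linear_combination (2 ^ e + 1 : ZMod (2 ^ (e + 2))) * hN
    · linear_combination (2 ^ e - 1 : ZMod (2 ^ (e + 2))) * hN

theorem ZMod.intCast_ne_intCast_of_lt_of_lt_add {N : ℕ} {a b : ℤ} (h₀ : a < b)
    (h₁ : b < a + N) : (a : ZMod N) ≠ b := by
  rw [Ne, ZMod.intCast_eq_intCast_iff_dvd_sub]
  intro h
  have := Int.eq_zero_of_abs_lt_dvd h (by rw [abs_of_pos (by omega)]; omega)
  omega

theorem ZMod.prod_filter_sq_eq_one_two_pow (e : ℕ) :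
    ∏ x : ZMod (2 ^ (e + 3)) with x ^ 2 = 1, x = 1 := by
  have hS : ({x : ZMod (2 ^ (e + 3)) | x ^ 2 = 1} : Finset _) =
      {1, -1, 2 ^ (e + 2) + 1, 2 ^ (e + 2) - 1} := by
    ext x
    simp [ZMod.sq_eq_one_iff_of_two_pow]
  have hne : ∀ a b : ℤ, a < b → b < a + 2 * 2 ^ (e + 2) → (a : ZMod (2 ^ (e + 3))) ≠ b :=
    fun a b h₀ h₁ => ZMod.intCast_ne_intCast_of_lt_of_lt_add h₀
      (by push_cast; linarith [pow_succ (2 : ℤ) (e + 2)])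
  have hc : (4 : ℤ) ≤ 2 ^ (e + 2) := by
    calc (4 : ℤ) = 2 ^ 2 := by norm_num
      _ ≤ 2 ^ (e + 2) := pow_le_pow_right₀ (by norm_num) (by omega)
  have hN : (2 : ZMod (2 ^ (e + 3))) ^ (e + 3) = 0 := by
    exact_mod_cast ZMod.natCast_self (2 ^ (e + 3))
  rw [hS, prod_insert, prod_insert, prod_pair]
  -- `(c + 1) * (c - 1) = -1` since `c ^ 2 = 0` for `c = 2 ^ (e + 2)`
  · linear_combination (-2 ^ (e + 1) : ZMod (2 ^ (e + 3))) * hN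
  · exact_mod_cast hne (2 ^ (e + 2) - 1) (2 ^ (e + 2) + 1) (by linarith) (by linarith) |>.symm
  · simp only [mem_insert, mem_singleton, not_or]
    exact ⟨by exact_mod_cast hne (-1) (2 ^ (e + 2) + 1) (by linarith) (by linarith),
      by exact_mod_cast hne (-1) (2 ^ (e + 2) - 1) (by linarith) (by linarith)⟩
  · simp only [mem_insert, mem_singleton, not_or]
    exact ⟨by exact_mod_cast (hne (-1) 1 (by linarith) (by linarith)).symm,
      by exact_mod_cast hne 1 (2 ^ (e + 2) + 1) (by linarith) (by linarith),
      by exact_mod_cast hne 1 (2 ^ (e + 2) - 1) (by linarith) (by linarith)⟩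

theorem ZMod.prod_units_prime_pow {p e : ℕ} [Fact p.Prime] (he : 4 < p ^ e) :
    ∏ u : (ZMod (p ^ e))ˣ, (u : ZMod (p ^ e)) = (-1) ^ p := by
  have hp : p.Prime := Fact.out
  rw [prod_units_eq_prod_filter_sq_eq_one]
  rcases eq_or_ne p 2 with rfl | hp2
  · obtain ⟨k, rfl⟩ : ∃ k, e = k + 3 := by
      have : 2 ^ 2 < 2 ^ e := he
      exact ⟨e - 3, by have := (Nat.pow_lt_pow_iff_right one_lt_two).mp this; omega⟩
    rw [ZMod.prod_filter_sq_eq_one_two_pow]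
    norm_num
  · have : Fact (2 < p ^ e) := ⟨by omega⟩
    have hS : ({x : ZMod (p ^ e) | x ^ 2 = 1} : Finset _) = {1, -1} := by
      ext x
      simp [ZMod.sq_eq_one_iff_of_odd_prime_pow hp hp2]
    rw [hS, prod_pair ZMod.neg_one_ne_one.symm, one_mul, (hp.odd_of_ne_two hp2).neg_one_pow]

theorem stmt0_general (p α e : ℕ) (hp : p.Prime)
    (he : 4 < p ^ e) :
    (unitPart p (Nat.factorial (α * p ^ (e - 1))) : ℤ) ≡
      (-1) ^ (p * α) * (unitPart p (Nat.factorial (α * p ^ e)) : ℤ) [ZMOD (p ^ e : ℕ)] := by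
  have := Fact.mk hp
  have he0 : e ≠ 0 := by rintro rfl; norm_num at he
  have hsplit : α * p ^ e = p * (α * p ^ (e - 1)) := by
    rw [mul_left_comm, ← pow_succ', Nat.sub_add_cancel (Nat.pos_of_ne_zero he0)]
  have hcoprime : ((∏ k ∈ range (α * p ^ e) with ¬p ∣ k, k : ℕ) : ZMod (p ^ e)) =
      ∏ k ∈ range (α * p ^ e) with IsUnit ((k : ℕ) : ZMod (p ^ e)), (k : ZMod (p ^ e)) := by
    simp only [Nat.cast_prod, ZMod.isUnit_natCast_prime_pow_iff hp he0]
  have key : (unitPart p (α * p ^ e)! : ZMod (p ^ e)) =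
      unitPart p (α * p ^ (e - 1))! * (-1) ^ (p * α) := by
    rw [unitPart_eq_ordCompl hp, unitPart_eq_ordCompl hp, hsplit, Nat.ordCompl_factorial_mul hp,
      Nat.cast_mul, ← hsplit, hcoprime, ZMod.prod_range_mul_filter_isUnit,
      ZMod.prod_units_prime_pow he, ← pow_mul]
  rw [← ZMod.intCast_eq_intCast_iff]
  push_cast
  rw [key, mul_left_comm, ← mul_pow, neg_one_mul, neg_neg, one_pow, mul_one]

theorem stmt0 (p α e : ℕ) (hp : p.Prime) (hα : 0 < α) (hpα : ¬ p ∣ α)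
    (he : 4 < p ^ e) :
    (unitPart p (Nat.factorial (α * p ^ (e - 1))) : ℤ) ≡
      (-1) ^ (p * α) * (unitPart p (Nat.factorial (α * p ^ e)) : ℤ) [ZMOD (p ^ e : ℕ)] :=
  stmt0_general p α e hp he
end

section
/- Let p be a prime and e a positive integer with p^e > 4. Then the product of all positive integers less than p^e that are coprime to p is congruent to (-1)^p modulo p^e. -/
open Finset

-- splitting lemma for odd primes
lemma aux_odd {p e : ℕ} (hp : p.Prime) (hodd : p ≠ 2) {a : ℤ}
    (h : ((p:ℤ))^e ∣ (a - 1) * (a + 1)) : ((p:ℤ))^e ∣ a - 1 ∨ ((p:ℤ))^e ∣ a + 1 := by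
  have hpZ : Prime (p : ℤ) := Nat.prime_iff_prime_int.mp hp
  by_cases h1 : (p:ℤ) ∣ a + 1
  · have h2 : ¬ (p:ℤ) ∣ a - 1 := by
      intro h2
      have hd : (p:ℤ) ∣ 2 := by
        have := dvd_sub h1 h2
        simpa using this
      have : (p:ℕ) ∣ 2 := by exact_mod_cast hd
      rcases (Nat.prime_two.eq_one_or_self_of_dvd p this) with h | h
      · exact hp.one_lt.ne' h
      · exact hodd h
    right
    exact ((hpZ.coprime_iff_not_dvd.mpr h2).pow_left).dvd_of_dvd_mul_left h
  · left
    exact ((hpZ.coprime_iff_not_dvd.mpr h1).pow_left).dvd_of_dvd_mul_right h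

lemma aux_two {e : ℕ} (he : 2 ≤ e) {a : ℤ} (h : (2:ℤ)^e ∣ (a - 1) * (a + 1)) :
    (2:ℤ)^(e-1) ∣ a - 1 ∨ (2:ℤ)^(e-1) ∣ a + 1 := by
  have h2 : (2:ℤ) ∣ (a-1)*(a+1) := dvd_trans (dvd_pow_self 2 (by omega : e ≠ 0)) h
  have hodd : (2:ℤ) ∣ a - 1 := by
    rcases (Int.prime_two.dvd_mul.mp h2) with h' | h'
    · exact h'
    · have heq : a - 1 = (a + 1) - 2 := by ring
      rw [heq]; exact dvd_sub h' dvd_rfl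
  obtain ⟨m, hm⟩ := hodd
  have ha1 : a + 1 = 2 * (m + 1) := by omega
  have key : (2:ℤ)^(e-2) ∣ m * (m+1) := by
    have h4 : (2:ℤ)^2 * (2:ℤ)^(e-2) ∣ (2:ℤ)^2 * (m * (m+1)) := by
      have heq : (2:ℤ)^2 * (2:ℤ)^(e-2) = 2^e := by rw [← pow_add]; congr 1; omega
      rw [heq]
      have heq2 : (a-1)*(a+1) = 2^2 * (m*(m+1)) := by rw [hm, ha1]; ring
      rw [← heq2]; exact h
    exact (mul_dvd_mul_iff_left (by norm_num : (2:ℤ)^2 ≠ 0)).mp h4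
  have he1 : (2:ℤ)^(e-1) = 2 * 2^(e-2) := by
    rw [← pow_succ']; congr 1; omega
  by_cases hm2 : (2:ℤ) ∣ m
  · have hnm1 : ¬ (2:ℤ) ∣ (m+1) := by
      intro hh; omega
    left
    have : (2:ℤ)^(e-2) ∣ m :=
      ((Int.prime_two.coprime_iff_not_dvd.mpr hnm1).pow_left).dvd_of_dvd_mul_right key
    rw [hm, he1]
    exact mul_dvd_mul_left 2 this
  · right
    have : (2:ℤ)^(e-2) ∣ m + 1 :=
      ((Int.prime_two.coprime_iff_not_dvd.mpr hm2).pow_left).dvd_of_dvd_mul_left key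
    rw [ha1, he1]
    exact mul_dvd_mul_left 2 this

lemma sqrt_one_odd {p e : ℕ} (hp : p.Prime) (hodd : p ≠ 2)
    {x : ZMod (p^e)} (hx : x * x = 1) : x = 1 ∨ x = -1 := by
  have : NeZero (p^e) := ⟨pow_ne_zero e hp.pos.ne'⟩
  set a : ℤ := (x.val : ℤ) with ha
  have hax : ((a : ℤ) : ZMod (p^e)) = x := by
    rw [ha]; push_cast; simp [ZMod.natCast_val, ZMod.cast_id]
  have hdvd : ((p:ℤ))^e ∣ (a-1)*(a+1) := by
    have : (((a-1)*(a+1) : ℤ) : ZMod (p^e)) = 0 := by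
      push_cast
      rw [hax]
      linear_combination hx
    have := (ZMod.intCast_zmod_eq_zero_iff_dvd _ _).mp this
    exact_mod_cast this
  rcases aux_odd hp hodd hdvd with h | h
  · left
    have : (((a - 1 : ℤ)) : ZMod (p^e)) = 0 :=
      (ZMod.intCast_zmod_eq_zero_iff_dvd _ _).mpr (by exact_mod_cast h)
    push_cast at this
    rw [hax] at this
    linear_combination this
  · right
    have : (((a + 1 : ℤ)) : ZMod (p^e)) = 0 :=
      (ZMod.intCast_zmod_eq_zero_iff_dvd _ _).mpr (by exact_mod_cast h)
    push_cast at this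
    rw [hax] at this
    linear_combination this

lemma sqrt_one_two {e : ℕ} (he : 3 ≤ e) {x : ZMod (2^e)} (hx : x * x = 1) :
    x = 1 ∨ x = -1 ∨ x = ((2^(e-1) : ℕ) : ZMod (2^e)) + 1 ∨
      x = ((2^(e-1) : ℕ) : ZMod (2^e)) - 1 := by
  have : NeZero (2^e) := ⟨pow_ne_zero e two_ne_zero⟩
  set c : ZMod (2^e) := ((2^(e-1) : ℕ) : ZMod (2^e)) with hc
  have h2c : (2 : ZMod (2^e)) * c = 0 := by
    rw [hc]
    have : (2 : ZMod (2^e)) * ((2^(e-1) : ℕ) : ZMod (2^e)) = ((2 * 2^(e-1) : ℕ) : ZMod (2^e)) := by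
      push_cast; ring
    rw [this]
    have : 2 * 2^(e-1) = 2^e := by rw [← pow_succ']; congr 1; omega
    rw [this, ZMod.natCast_self]
  set a : ℤ := (x.val : ℤ) with ha
  have hax : ((a : ℤ) : ZMod (2^e)) = x := by
    rw [ha]; push_cast; simp [ZMod.natCast_val, ZMod.cast_id]
  have hdvd : (2:ℤ)^e ∣ (a-1)*(a+1) := by
    have : (((a-1)*(a+1) : ℤ) : ZMod (2^e)) = 0 := by
      push_cast
      rw [hax]
      linear_combination hx
    have := (ZMod.intCast_zmod_eq_zero_iff_dvd _ _).mp this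
    exact_mod_cast this
  have hck : ∀ k : ℤ, c * (k : ZMod (2^e)) = 0 ∨ c * (k : ZMod (2^e)) = c := by
    intro k
    rcases Int.even_or_odd k with ⟨j, hj⟩ | ⟨j, hj⟩
    · left
      rw [hj]; push_cast
      calc c * ((j : ZMod (2^e)) + j) = (2 * c) * j := by ring
      _ = 0 := by rw [h2c]; ring
    · right
      rw [hj]; push_cast
      calc c * (2 * (j : ZMod (2^e)) + 1) = (2 * c) * j + c := by ring
      _ = c := by rw [h2c]; ring
  have hcast : ∀ b : ℤ, (2:ℤ)^(e-1) ∣ b → ∃ k : ℤ, ((b : ℤ) : ZMod (2^e)) = c * k := by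
    rintro b ⟨k, hk⟩
    refine ⟨k, ?_⟩
    rw [hk, hc]
    push_cast
    ring
  rcases aux_two (by omega) hdvd with h | h
  · obtain ⟨k, hk⟩ := hcast _ h
    push_cast at hk
    rw [hax] at hk
    rcases hck k with h0 | h0
    · left; rw [h0] at hk; linear_combination hk
    · right; right; left; rw [h0] at hk; linear_combination hk
  · obtain ⟨k, hk⟩ := hcast _ h
    push_cast at hk
    rw [hax] at hk
    rcases hck k with h0 | h0
    · right; left; rw [h0] at hk; linear_combination hk
    · right; right; right; rw [h0] at hk; linear_combination hk

lemma prod_univ_eq_prod_self_inv {G : Type*} [CommGroup G] [Fintype G] [DecidableEq G] :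
    ∏ g : G, g = ∏ g ∈ univ.filter (fun g => g⁻¹ = g), g := by
  rw [← Finset.prod_filter_mul_prod_filter_not (univ : Finset G) (fun g => g⁻¹ = g) (fun g => g)]
  have : ∏ g ∈ (univ : Finset G).filter (fun g => ¬ g⁻¹ = g), g = 1 := by
    refine Finset.prod_involution (fun a _ => a⁻¹) (fun a _ => mul_inv_cancel a)
      (fun a ha _ => (Finset.mem_filter.mp ha).2) ?_ (fun a _ => inv_inv a)
    · intro a ha
      simp only [Finset.mem_filter, Finset.mem_univ, true_and] at ha ⊢
      rw [inv_inv]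
      exact fun h => ha h.symm
  rw [this, mul_one]

lemma prod_coprime_eq_prod_units {p e : ℕ} [NeZero (p^e)] (hp : p.Prime) (he : 1 ≤ e) (hn : 1 < p^e) :
    ∏ x ∈ (Finset.Ico 1 (p^e)).filter (fun x => Nat.Coprime x p), (x : ZMod (p^e)) =
      ∏ u : (ZMod (p^e))ˣ, (u : ZMod (p^e)) := by
  refine Finset.prod_bij
    (fun x hx => ZMod.unitOfCoprime x ((Finset.mem_filter.mp hx).2.pow_right e))
    (fun _ _ => Finset.mem_univ _) ?_ ?_ ?_
  · intro a₁ ha₁ a₂ ha₂ h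
    have h' : ((a₁ : ℕ) : ZMod (p^e)) = a₂ := by
      have := congrArg (Units.val) h
      rwa [ZMod.coe_unitOfCoprime, ZMod.coe_unitOfCoprime] at this
    have hb₁ := (Finset.mem_Ico.mp (Finset.mem_filter.mp ha₁).1).2
    have hb₂ := (Finset.mem_Ico.mp (Finset.mem_filter.mp ha₂).1).2
    have := congrArg ZMod.val h'
    rwa [ZMod.val_cast_of_lt hb₁, ZMod.val_cast_of_lt hb₂] at this
  · intro u _
    have hco : Nat.Coprime ((u : ZMod (p^e)).val) (p^e) := ZMod.val_coe_unit_coprime u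
    have hcop : Nat.Coprime ((u : ZMod (p^e)).val) p :=
      Nat.Coprime.coprime_dvd_right (dvd_pow_self p (by omega)) hco
    have hv0 : (u : ZMod (p^e)).val ≠ 0 := by
      intro h0
      rw [h0] at hco
      have := Nat.coprime_zero_left (p^e) |>.mp hco
      omega
    refine ⟨(u : ZMod (p^e)).val, Finset.mem_filter.mpr
      ⟨Finset.mem_Ico.mpr ⟨by omega, ZMod.val_lt _⟩, hcop⟩, ?_⟩
    apply Units.ext
    rw [ZMod.coe_unitOfCoprime]
    simp [ZMod.natCast_val, ZMod.cast_id]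
  · intro a _
    rw [ZMod.coe_unitOfCoprime]

theorem stmt3 (p e : ℕ) (hp : p.Prime) (he : 1 ≤ e) (h4 : 4 < p ^ e) :
    (∏ x ∈ (Finset.Ico 1 (p ^ e)).filter (fun x => Nat.Coprime x p), (x : ℤ)) ≡
      (-1) ^ p [ZMOD (p ^ e : ℕ)] := by
  have hn : NeZero (p^e) := ⟨by omega⟩
  have hF : Fact (2 < p^e) := ⟨by omega⟩
  rw [← ZMod.intCast_eq_intCast_iff]
  push_cast
  rw [prod_coprime_eq_prod_units hp he (by omega)]
  simp_rw [← Units.coeHom_apply]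
  rw [← map_prod (Units.coeHom (ZMod (p^e)))]
  classical
  rw [prod_univ_eq_prod_self_inv]
  by_cases hp2 : p = 2
  · subst hp2
    have he3 : 3 ≤ e := by
      by_contra h
      interval_cases e <;> omega
    set c : ZMod (2^e) := ((2^(e-1) : ℕ) : ZMod (2^e)) with hc
    have h2e : 2^e = 2 * 2^(e-1) := by rw [← pow_succ']; congr 1; omega
    have h4e : 4 ≤ 2^(e-1) := by
      calc (4:ℕ) = 2^2 := rfl
      _ ≤ 2^(e-1) := Nat.pow_le_pow_right (by norm_num) (by omega)
    have h2c : (2 : ZMod (2^e)) * c = 0 := by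
      rw [hc]
      have h' : (2 : ZMod (2^e)) * ((2^(e-1) : ℕ) : ZMod (2^e)) = ((2 * 2^(e-1) : ℕ) : ZMod (2^e)) := by
        push_cast; ring
      rw [h', ← h2e, ZMod.natCast_self]
    have hcc : c * c = 0 := by
      rw [hc]
      have h' : ((2^(e-1) : ℕ) : ZMod (2^e)) * ((2^(e-1) : ℕ) : ZMod (2^e))
          = ((2^(e-1) * 2^(e-1) : ℕ) : ZMod (2^e)) := by push_cast; ring
      rw [h', ZMod.natCast_eq_zero_iff]
      have : 2^(e-1) * 2^(e-1) = 2^(e-1+(e-1)) := by rw [pow_add]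
      rw [this]
      exact pow_dvd_pow 2 (by omega)
    have hu1 : (c+1)*(c+1) = 1 := by linear_combination hcc + h2c
    have hu2 : (c-1)*(c-1) = 1 := by linear_combination hcc - h2c
    set w1 : (ZMod (2^e))ˣ := ⟨c+1, c+1, hu1, hu1⟩ with hw1
    set w2 : (ZMod (2^e))ˣ := ⟨c-1, c-1, hu2, hu2⟩ with hw2
    have hinj : ∀ a b : ℕ, a < 2^e → b < 2^e → ((a : ZMod (2^e)) = (b : ZMod (2^e))) → a = b := by
      intro a b ha hb h
      have := congrArg ZMod.val h
      rwa [ZMod.val_cast_of_lt ha, ZMod.val_cast_of_lt hb] at this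
    -- nat-cast forms of the four elements
    have hm1 : ((2^e - 1 : ℕ) : ZMod (2^e)) = -1 := by
      rw [Nat.cast_sub (by omega : 1 ≤ 2^e), ZMod.natCast_self]
      push_cast; ring
    have hc1 : ((2^(e-1) + 1 : ℕ) : ZMod (2^e)) = c + 1 := by rw [hc]; push_cast; ring
    have hc2 : ((2^(e-1) - 1 : ℕ) : ZMod (2^e)) = c - 1 := by
      rw [Nat.cast_sub (by omega : 1 ≤ 2^(e-1)), hc]
      push_cast; ring
    have hone : ((1 : ℕ) : ZMod (2^e)) = 1 := by push_cast; ring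
    have hd12 : (1 : (ZMod (2^e))ˣ) ≠ -1 := by
      intro h
      have := congrArg Units.val h
      rw [Units.val_one, Units.val_neg, Units.val_one, ← hm1, ← hone] at this
      have := hinj _ _ (by omega) (by omega) this
      omega
    have hd13 : (1 : (ZMod (2^e))ˣ) ≠ w1 := by
      intro h
      have := congrArg Units.val h
      rw [Units.val_one, hw1] at this
      simp only at this
      rw [← hc1, ← hone] at this
      have := hinj _ _ (by omega) (by omega) this
      omega
    have hd14 : (1 : (ZMod (2^e))ˣ) ≠ w2 := by
      intro h
      have := congrArg Units.val h
      rw [Units.val_one, hw2] at this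
      simp only at this
      rw [← hc2, ← hone] at this
      have := hinj _ _ (by omega) (by omega) this
      omega
    have hd23 : (-1 : (ZMod (2^e))ˣ) ≠ w1 := by
      intro h
      have := congrArg Units.val h
      rw [Units.val_neg, Units.val_one, hw1] at this
      simp only at this
      rw [← hm1, ← hc1] at this
      have := hinj _ _ (by omega) (by omega) this
      omega
    have hd24 : (-1 : (ZMod (2^e))ˣ) ≠ w2 := by
      intro h
      have := congrArg Units.val h
      rw [Units.val_neg, Units.val_one, hw2] at this
      simp only at this
      rw [← hm1, ← hc2] at this
      have := hinj _ _ (by omega) (by omega) this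
      omega
    have hd34 : w1 ≠ w2 := by
      intro h
      have := congrArg Units.val h
      rw [hw1, hw2] at this
      simp only at this
      rw [← hc1, ← hc2] at this
      have := hinj _ _ (by omega) (by omega) this
      omega
    have hS : (Finset.univ : Finset (ZMod (2^e))ˣ).filter (fun u => u⁻¹ = u)
        = {1, -1, w1, w2} := by
      ext u
      simp only [Finset.mem_filter, Finset.mem_univ, true_and, Finset.mem_insert,
        Finset.mem_singleton]
      constructor
      · intro h
        have huu : (u : ZMod (2^e)) * u = 1 := by
          have h' : u * u = 1 := by nth_rewrite 1 [← h]; exact inv_mul_cancel u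
          have := congrArg Units.val h'
          simpa using this
        rcases sqrt_one_two he3 huu with h' | h' | h' | h'
        · exact Or.inl (Units.ext (by simpa using h'))
        · exact Or.inr (Or.inl (Units.ext (by simpa using h')))
        · refine Or.inr (Or.inr (Or.inl (Units.ext ?_)))
          rw [hw1]; simpa [← hc] using h'
        · refine Or.inr (Or.inr (Or.inr (Units.ext ?_)))
          rw [hw2]; simpa [← hc] using h'
      · rintro (rfl | rfl | rfl | rfl)
        · simp
        · simp
        · exact inv_eq_of_mul_eq_one_right (Units.ext (by simpa using hu1))
        · exact inv_eq_of_mul_eq_one_right (Units.ext (by simpa using hu2))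
    rw [hS]
    rw [Finset.prod_insert (by simp [hd12, hd13, hd14]),
        Finset.prod_insert (by simp [hd23, hd24]),
        Finset.prod_pair hd34, one_mul]
    have : (-1 : (ZMod (2^e))ˣ) * (w1 * w2) = 1 := by
      apply Units.ext
      simp only [Units.val_mul, Units.val_neg, Units.val_one, hw1, hw2]
      linear_combination -hcc
    rw [this]
    simp
  · -- odd prime case
    have hS : (Finset.univ : Finset (ZMod (p^e))ˣ).filter (fun u => u⁻¹ = u)
        = {1, -1} := by
      ext u
      simp only [Finset.mem_filter, Finset.mem_univ, true_and, Finset.mem_insert,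
        Finset.mem_singleton]
      constructor
      · intro h
        have huu : (u : ZMod (p^e)) * u = 1 := by
          have h' : u * u = 1 := by nth_rewrite 1 [← h]; exact inv_mul_cancel u
          have := congrArg Units.val h'
          simpa using this
        rcases sqrt_one_odd hp hp2 huu with h' | h'
        · exact Or.inl (Units.ext (by simpa using h'))
        · exact Or.inr (Units.ext (by simpa using h'))
      · rintro (rfl | rfl) <;> simp
    rw [hS]
    have hne : (1 : (ZMod (p^e))ˣ) ≠ -1 := by
      intro h
      have := congrArg Units.val h
      rw [Units.val_one, Units.val_neg, Units.val_one] at this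
      exact ZMod.neg_one_ne_one this.symm
    rw [Finset.prod_insert (by simpa using hne), Finset.prod_singleton, one_mul]
    have hpodd : Odd p := hp.odd_of_ne_two hp2
    rw [hpodd.neg_one_pow]
    simp
end

section
/- For any prime p and positive integers a, b with b ≤ a and any e ≥ 0, ν_p(C(a·p^e, b·p^e)) = ν_p(C(a, b)), where C denotes the binomial coefficient. -/
/-! By Legendre's formula, `(p - 1) · ν_p (C(n + k, k))` is the digit-sum defect
`s_p(k) + s_p(n) - s_p(n + k)`; multiplying by `p ^ e` only appends zero digits, so no
base-`p` digit sum changes. -/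

theorem Nat.digits_sum_mul_pow {p : ℕ} (hp : 1 < p) (n e : ℕ) :
    (p.digits (n * p ^ e)).sum = (p.digits n).sum := by
  rcases n.eq_zero_or_pos with rfl | hn
  · simp
  · rw [mul_comm, Nat.digits_base_pow_mul hp hn]
    simp

theorem padicValNat_choose_add_mul_pow (p n k e : ℕ) [hp : Fact p.Prime] :
    padicValNat p ((n * p ^ e + k * p ^ e).choose (k * p ^ e)) =
      padicValNat p ((n + k).choose k) := by
  have hp1 : p - 1 ≠ 0 := Nat.sub_ne_zero_of_lt hp.out.one_lt
  apply Nat.eq_of_mul_eq_mul_left (Nat.pos_of_ne_zero hp1)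
  rw [sub_one_mul_padicValNat_choose_eq_sub_sum_digits',
    sub_one_mul_padicValNat_choose_eq_sub_sum_digits', ← Nat.add_mul]
  simp only [Nat.digits_sum_mul_pow hp.out.one_lt]

theorem padicValNat_choose_mul_pow (p a b e : ℕ) [hp : Fact p.Prime] :
    padicValNat p ((a * p ^ e).choose (b * p ^ e)) = padicValNat p (a.choose b) := by
  rcases le_or_gt b a with hba | hab
  · obtain ⟨n, rfl⟩ := Nat.exists_eq_add_of_le' hba
    rw [Nat.add_mul, padicValNat_choose_add_mul_pow]
  · have hpe : 0 < p ^ e := pow_pos hp.out.pos e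
    rw [Nat.choose_eq_zero_of_lt hab,
      Nat.choose_eq_zero_of_lt (Nat.mul_lt_mul_of_pos_right hab hpe)]

theorem stmt5_general (p a b e : ℕ) (hp : p.Prime) :
    padicValNat p ((a * p ^ e).choose (b * p ^ e)) = padicValNat p (a.choose b) :=
  haveI := Fact.mk hp
  padicValNat_choose_mul_pow p a b e

theorem stmt5 (p a b e : ℕ) (hp : p.Prime) (ha : 0 < a) (hb : 0 < b) (hba : b ≤ a) :
    padicValNat p ((a * p ^ e).choose (b * p ^ e)) = padicValNat p (a.choose b) :=
  stmt5_general p a b e hp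
end

section
/- Let p be a prime and 1 ≤ b ≤ a integers. The p-adic limit as e → ∞ of C(a·p^e, b·p^e) exists in Z_p. -/
/-!
The polynomial congruence `(1 + X)^p ≡ 1 + X^p (mod p)` lifts to
`(1 + X)^(p^(e+1)) ≡ (1 + X^p)^(p^e) (mod p^(e+1))`. Raising to the `a`-th power and comparing the
coefficients of `X^(b p^(e+1))` gives `C(a p^(e+1), b p^(e+1)) ≡ C(a p^e, b p^e) (mod p^(e+1))`,
so the sequence is Cauchy in `ℤ_[p]`, which is complete.
-/

open Polynomial

theorem Nat.Prime.dvd_add_pow_sub_add_pow {R : Type*} [CommRing R] {p : ℕ} (hp : p.Prime)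
    (x y : R) : (p : R) ∣ (x + y) ^ p - (x ^ p + y ^ p) := by
  obtain ⟨r, hr⟩ := exists_add_pow_prime_eq hp x y
  exact ⟨x * y * r, by rw [hr]; ring⟩

theorem Nat.Prime.pow_succ_dvd_add_pow_sub_add_pow {R : Type*} [CommRing R] {p : ℕ}
    (hp : p.Prime) (x y : R) (e : ℕ) :
    (p : R) ^ (e + 1) ∣ (x + y) ^ p ^ (e + 1) - (x ^ p + y ^ p) ^ p ^ e := by
  rw [show p ^ (e + 1) = p * p ^ e by ring, pow_mul]
  exact dvd_sub_pow_of_dvd_sub (hp.dvd_add_pow_sub_add_pow x y) e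

theorem Nat.Prime.pow_succ_dvd_choose_mul_pow_succ_sub {p : ℕ} (hp : p.Prime) (a b e : ℕ) :
    (p : ℤ) ^ (e + 1) ∣
      ((a * p ^ (e + 1)).choose (b * p ^ (e + 1)) : ℤ) - (a * p ^ e).choose (b * p ^ e) := by
  have hpoly : (p : ℤ[X]) ^ (e + 1) ∣
      (1 + X) ^ (a * p ^ (e + 1)) - expand ℤ p ((1 + X) ^ (a * p ^ e)) := by
    have h := (hp.pow_succ_dvd_add_pow_sub_add_pow (1 : ℤ[X]) X e).trans
      (sub_dvd_pow_sub_pow _ _ a)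
    rw [one_pow, ← pow_mul, ← pow_mul, mul_comm] at h
    rwa [map_pow, map_add, map_one, expand_X, mul_comm a (p ^ e)]
  rw [← C_eq_natCast, ← map_pow, C_dvd_iff_dvd_coeff] at hpoly
  have hdeg : b * p ^ (e + 1) = p * (b * p ^ e) := by ring
  simpa only [coeff_sub, coeff_one_add_X_pow, hdeg, coeff_expand_mul' hp.pos]
    using hpoly (b * p ^ (e + 1))

theorem PadicInt.cauchySeq_of_pow_dvd_succ_sub {p : ℕ} [Fact p.Prime] {f : ℕ → ℤ_[p]}
    (h : ∀ n, (p : ℤ_[p]) ^ n ∣ f (n + 1) - f n) : CauchySeq f := by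
  have hp : (1 : ℝ) < p := mod_cast (Fact.out : p.Prime).one_lt
  refine cauchySeq_of_le_geometric (p : ℝ)⁻¹ 1 (inv_lt_one_of_one_lt₀ hp) fun n => ?_
  have hnorm := (norm_le_pow_iff_mem_span_pow _ n).mpr (Ideal.mem_span_singleton.mpr (h n))
  rwa [dist_comm, dist_eq_norm, one_mul, inv_pow, ← zpow_natCast, ← zpow_neg]

theorem stmt9_general (p : ℕ) [Fact p.Prime] (a b : ℕ) :
    ∃ L : ℤ_[p],
      Filter.Tendsto (fun e : ℕ => (((a * p ^ e).choose (b * p ^ e) : ℕ) : ℤ_[p]))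
        Filter.atTop (nhds L) := by
  refine cauchySeq_tendsto_of_complete (PadicInt.cauchySeq_of_pow_dvd_succ_sub fun e => ?_)
  have hdvd := (pow_dvd_pow (p : ℤ) e.le_succ).trans
    ((Fact.out : p.Prime).pow_succ_dvd_choose_mul_pow_succ_sub a b e)
  exact_mod_cast (PadicInt.pow_p_dvd_int_iff e _).mpr hdvd

theorem stmt9 (p : ℕ) [Fact p.Prime] (a b : ℕ) (hb : 1 ≤ b) (hba : b ≤ a) :
    ∃ L : ℤ_[p],
      Filter.Tendsto (fun e : ℕ => (((a * p ^ e).choose (b * p ^ e) : ℕ) : ℤ_[p]))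
        Filter.atTop (nhds L) :=
  stmt9_general p a b
end

section
/- Let f : Z × Z → R be a function into a commutative ring satisfying Pascal's relation f(n,k) = f(n-1,k) + f(n-1,k-1) for all integers n, k. Suppose f(0,d) = A·δ_{0,d} for all d ∈ Z (A a fixed ring element) and f(c,0) = A·r for all c < 0 (r a fixed ring element). Then f(c,d) = A·C(c,d) for c,d ≥ 0; f(c,d) = A·C(c,d)·r for c < 0 ≤ d; f(c,d) = A·C(c,c-d)·(1-r) for c < 0 ≤ c-d; and f(c,d) = 0 otherwise. -/
/-- Generalized binomial coefficient `C(c,d) = c(c-1)⋯(c-d+1)/d!` for `c : ℤ`, `d : ℕ`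
(the integer division is exact). -/
def genChoose (c : ℤ) (d : ℕ) : ℤ :=
  (∏ j ∈ Finset.range d, (c - j)) / (d.factorial : ℤ)

private lemma desc_eq_prod (c : ℤ) (d : ℕ) :
    (descPochhammer ℤ d).eval c = ∏ j ∈ Finset.range d, (c - j) := by
  induction d with
  | zero => simp
  | succ n ih => rw [descPochhammer_succ_eval, ih, Finset.prod_range_succ]

private lemma factorial_dvd_prod (c : ℤ) (d : ℕ) :
    (d.factorial : ℤ) ∣ ∏ j ∈ Finset.range d, (c - j) := by
  rw [← desc_eq_prod, Polynomial.eval_eq_smeval,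
    Ring.descPochhammer_eq_factorial_smul_choose]
  exact Dvd.intro _ (by rw [nsmul_eq_mul])

private lemma genChoose_zero (c : ℤ) : genChoose c 0 = 1 := by simp [genChoose]

private lemma genChoose_zero_left {d : ℕ} (hd : d ≠ 0) : genChoose 0 d = 0 := by
  have : (∏ j ∈ Finset.range d, ((0:ℤ) - j)) = 0 :=
    Finset.prod_eq_zero (Finset.mem_range.2 (Nat.pos_of_ne_zero hd)) (by simp)
  unfold genChoose
  rw [this, Int.zero_ediv]

private lemma genChoose_pascal (c : ℤ) (d : ℕ) :
    genChoose c (d+1) = genChoose (c-1) (d+1) + genChoose (c-1) d := by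
  have hhead : (∏ j ∈ Finset.range d, (c - (j+1) : ℤ))
      = ∏ j ∈ Finset.range d, (c - 1 - j) := by
    refine Finset.prod_congr rfl fun j _ => by push_cast; ring
  have key : (∏ j ∈ Finset.range (d+1), (c - j))
      = (∏ j ∈ Finset.range (d+1), (c - 1 - j))
        + ((d:ℤ)+1) * ∏ j ∈ Finset.range d, (c - 1 - j) := by
    rw [Finset.prod_range_succ' (fun j : ℕ => (c - j : ℤ)) d,
      Finset.prod_range_succ (fun j : ℕ => (c - 1 - j : ℤ)) d]
    push_cast
    rw [hhead]
    ring
  have h1 : ((d+1).factorial : ℤ) ∣ ∏ j ∈ Finset.range (d+1), (c - 1 - j) :=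
    factorial_dvd_prod (c-1) (d+1)
  have hfac : (((d+1).factorial : ℕ) : ℤ) = ((d:ℤ)+1) * (d.factorial : ℤ) := by
    rw [Nat.factorial_succ]; push_cast; ring
  unfold genChoose
  rw [key, Int.add_ediv_of_dvd_left h1, hfac,
    Int.mul_ediv_mul_of_pos _ _ (by positivity)]

section
variable {R : Type*} [CommRing R]

private def gAux (A r : R) (c d : ℤ) : R :=
  if 0 ≤ c ∧ 0 ≤ d then A * (genChoose c d.toNat : R)
  else if c < 0 ∧ 0 ≤ d then A * (genChoose c d.toNat : R) * r
  else if c < 0 ∧ 0 ≤ c - d then A * (genChoose c (c - d).toNat : R) * (1 - r)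
  else 0

variable (A r : R)

private lemma g1 {c d : ℤ} (h1 : 0 ≤ c) (h2 : 0 ≤ d) :
    gAux A r c d = A * (genChoose c d.toNat : R) := by
  unfold gAux; rw [if_pos ⟨h1, h2⟩]

private lemma g2 {c d : ℤ} (h1 : c < 0) (h2 : 0 ≤ d) :
    gAux A r c d = A * (genChoose c d.toNat : R) * r := by
  unfold gAux; rw [if_neg (by omega), if_pos ⟨h1, h2⟩]

private lemma g3 {c d : ℤ} (h1 : c < 0) (h2 : 0 ≤ c - d) :
    gAux A r c d = A * (genChoose c (c - d).toNat : R) * (1 - r) := by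
  unfold gAux; rw [if_neg (by omega), if_neg (by omega), if_pos ⟨h1, h2⟩]

private lemma g4 {c d : ℤ} (h1 : ¬ (0 ≤ c ∧ 0 ≤ d)) (h2 : ¬ (c < 0 ∧ 0 ≤ d))
    (h3 : ¬ (c < 0 ∧ 0 ≤ c - d)) : gAux A r c d = 0 := by
  unfold gAux; rw [if_neg h1, if_neg h2, if_neg h3]

private lemma gPascal : ∀ n k : ℤ,
    gAux A r n k = gAux A r (n-1) k + gAux A r (n-1) (k-1) := by
  intro n k
  rcases lt_trichotomy n 0 with hn | hn | hn
  · -- n < 0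
    rcases lt_trichotomy k 0 with hk | hk | hk
    · -- k < 0
      rcases lt_trichotomy (n - k) 0 with hnk | hnk | hnk
      · rw [g4 A r (by omega) (by omega) (by omega),
          g4 A r (by omega) (by omega) (by omega),
          g4 A r (by omega) (by omega) (by omega)]
        ring
      · -- n - k = 0
        rw [g3 A r (by omega) (by omega), g4 A r (by omega) (by omega) (by omega),
          g3 A r (by omega) (by omega)]
        rw [show n - 1 - (k - 1) = n - k from by ring, hnk]
        simp only [Int.toNat_zero, genChoose_zero]
        ring
      · -- n - k ≥ 1
        rw [g3 A r (by omega) (by omega), g3 A r (by omega) (by omega),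
          g3 A r (by omega) (by omega)]
        rw [show n - 1 - (k - 1) = n - k from by ring,
          show (n - k).toNat = (n - 1 - k).toNat + 1 from by omega,
          genChoose_pascal]
        push_cast
        ring
    · -- k = 0
      subst hk
      rw [g2 A r (by omega) le_rfl, g2 A r (by omega) le_rfl,
        g4 A r (by omega) (by omega) (by omega)]
      simp only [Int.toNat_zero, genChoose_zero, Int.cast_one, mul_one]
      ring
    · -- k > 0
      rw [g2 A r (by omega) (by omega), g2 A r (by omega) (by omega),
        g2 A r (by omega) (by omega)]
      rw [show k.toNat = (k - 1).toNat + 1 from by omega, genChoose_pascal]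
      push_cast
      ring
  · -- n = 0
    subst hn
    rcases lt_trichotomy k 0 with hk | hk | hk
    · -- k < 0
      rw [g4 A r (by omega) (by omega) (by omega), g3 A r (by omega) (by omega),
        g3 A r (by omega) (by omega)]
      have h1 : (0:ℤ) - 1 - (k - 1) = -k := by ring
      have h2 : (-k).toNat = (0 - 1 - k).toNat + 1 := by omega
      have h3 := genChoose_pascal 0 ((0 - 1 - k).toNat)
      have h4 : genChoose 0 ((0 - 1 - k).toNat + 1) = 0 :=
        genChoose_zero_left (by omega)
      have h5 : genChoose (0 - 1) ((0-1-k).toNat + 1)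
          = - genChoose (0 - 1) ((0-1-k).toNat) := by omega
      rw [h1, h2, h5]
      push_cast
      ring
    · subst hk
      rw [g1 A r le_rfl le_rfl, g2 A r (by omega) le_rfl,
        g3 A r (by omega) (by omega)]
      norm_num [genChoose_zero]
      ring
    · -- k > 0
      rw [g1 A r le_rfl (by omega), g2 A r (by omega) (by omega),
        g2 A r (by omega) (by omega)]
      have h2 : k.toNat = (k - 1).toNat + 1 := by omega
      have h3 := genChoose_pascal 0 ((k - 1).toNat)
      have h4 : genChoose 0 ((k - 1).toNat + 1) = 0 :=
        genChoose_zero_left (by omega)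
      have h5 : genChoose (0 - 1) ((k-1).toNat + 1)
          = - genChoose (0 - 1) ((k-1).toNat) := by omega
      rw [h2, h4, h5]
      push_cast
      ring
  · -- n > 0
    rcases lt_trichotomy k 0 with hk | hk | hk
    · rw [g4 A r (by omega) (by omega) (by omega),
        g4 A r (by omega) (by omega) (by omega),
        g4 A r (by omega) (by omega) (by omega)]
      ring
    · subst hk
      rw [g1 A r (by omega) le_rfl, g1 A r (by omega) le_rfl,
        g4 A r (by omega) (by omega) (by omega)]
      simp only [Int.toNat_zero, genChoose_zero, Int.cast_one, mul_one]
      ring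
    · rw [g1 A r (by omega) (by omega), g1 A r (by omega) (by omega),
        g1 A r (by omega) (by omega)]
      rw [show k.toNat = (k - 1).toNat + 1 from by omega, genChoose_pascal]
      push_cast
      ring

end

theorem stmt10 {R : Type*} [CommRing R] (f : ℤ → ℤ → R) (A r : R)
    (hPas : ∀ n k : ℤ, f n k = f (n - 1) k + f (n - 1) (k - 1))
    (h0 : ∀ d : ℤ, f 0 d = if d = 0 then A else 0)
    (hneg : ∀ c : ℤ, c < 0 → f c 0 = A * r) :
    ∀ c d : ℤ,
      (0 ≤ c → 0 ≤ d → f c d = A * (genChoose c d.toNat : R)) ∧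
      (c < 0 → 0 ≤ d → f c d = A * (genChoose c d.toNat : R) * r) ∧
      (c < 0 → 0 ≤ c - d → f c d = A * (genChoose c (c - d).toNat : R) * (1 - r)) ∧
      (¬ (0 ≤ c ∧ 0 ≤ d) → ¬ (c < 0 ∧ 0 ≤ d) → ¬ (c < 0 ∧ 0 ≤ c - d) → f c d = 0) := by
  set g : ℤ → ℤ → R := gAux A r with hg
  -- h = f - g satisfies the same recursion with zero boundary data
  set h : ℤ → ℤ → R := fun c d => f c d - g c d with hh
  have hhPas : ∀ n k : ℤ, h n k = h (n - 1) k + h (n - 1) (k - 1) := by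
    intro n k
    simp only [hh]
    rw [hPas n k, hg, gPascal A r n k]
    ring
  have hh0 : ∀ d : ℤ, h 0 d = 0 := by
    intro d
    simp only [hh, hg]
    rw [h0 d]
    rcases lt_trichotomy d 0 with hd | hd | hd
    · rw [if_neg (by omega), g4 A r (by omega) (by omega) (by omega)]; ring
    · subst hd
      rw [if_pos rfl, g1 A r le_rfl le_rfl]
      simp [genChoose_zero]
    · rw [if_neg (by omega), g1 A r le_rfl (by omega),
        genChoose_zero_left (show d.toNat ≠ 0 by omega)]
      simp
  have hhneg : ∀ c : ℤ, c < 0 → h c 0 = 0 := by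
    intro c hc
    simp only [hh, hg]
    rw [hneg c hc, g2 A r hc le_rfl]
    simp [genChoose_zero]
  -- upward: all nonnegative rows vanish
  have hup : ∀ n : ℕ, ∀ k : ℤ, h (n : ℤ) k = 0 := by
    intro n
    induction n with
    | zero => exact fun k => by simpa using hh0 k
    | succ m ih =>
      intro k
      have := hhPas ((m : ℤ) + 1) k
      rw [show ((m : ℤ) + 1) - 1 = (m : ℤ) from by ring] at this
      push_cast
      rw [this, ih k, ih (k - 1), add_zero]
  -- downward rows
  have hdown : ∀ n : ℕ, ∀ k : ℤ, h (-(n : ℤ)) k = 0 := by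
    intro n
    induction n with
    | zero => intro k; simpa using hh0 k
    | succ m ih =>
      have hc : (-((m : ℤ) + 1)) < 0 := by omega
      have hU : ∀ j : ℕ, h (-((m : ℤ) + 1)) (j : ℤ) = 0 := by
        intro j
        induction j with
        | zero => simpa using hhneg _ (by push_cast; omega)
        | succ i ihi =>
          have := hhPas (-(m : ℤ)) ((i : ℤ) + 1)
          rw [show (-(m : ℤ)) - 1 = -((m : ℤ) + 1) from by ring,
            show ((i : ℤ) + 1) - 1 = (i : ℤ) from by ring, ih ((i : ℤ) + 1),
            ihi] at this
          push_cast
          linear_combination -this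
      have hD : ∀ j : ℕ, h (-((m : ℤ) + 1)) (-(j : ℤ)) = 0 := by
        intro j
        induction j with
        | zero => simpa using hhneg _ (by push_cast; omega)
        | succ i ihi =>
          have := hhPas (-(m : ℤ)) (-(i : ℤ))
          rw [show (-(m : ℤ)) - 1 = -((m : ℤ) + 1) from by ring,
            ih (-(i : ℤ)), ihi] at this
          have h6 : -(((i : ℕ) + 1 : ℕ) : ℤ) = -(i : ℤ) - 1 := by push_cast; ring
          rw [h6]
          linear_combination -this
      intro k
      rcases le_or_gt 0 k with hk | hk
      · have := hU k.toNat
        rwa [Int.toNat_of_nonneg hk, show -((m : ℤ) + 1) = -((m + 1 : ℕ) : ℤ)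
          from by push_cast; ring] at this
      · have := hD (-k).toNat
        rwa [show (((-k).toNat : ℤ)) = -k from Int.toNat_of_nonneg (by omega),
          neg_neg, show -((m : ℤ) + 1) = -((m + 1 : ℕ) : ℤ) from by push_cast; ring]
          at this
  have hfg : ∀ c d : ℤ, f c d = g c d := by
    intro c d
    have : h c d = 0 := by
      rcases le_or_gt 0 c with hc | hc
      · have := hup c.toNat d
        rwa [Int.toNat_of_nonneg hc] at this
      · have := hdown (-c).toNat d
        rwa [show (((-c).toNat : ℤ)) = -c from Int.toNat_of_nonneg (by omega),
          neg_neg] at this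
    have := this
    simp only [hh] at this
    linear_combination this
  intro c d
  refine ⟨fun h1 h2 => ?_, fun h1 h2 => ?_, fun h1 h2 => ?_, fun h1 h2 h3 => ?_⟩
  · rw [hfg c d, hg]; exact g1 A r h1 h2
  · rw [hfg c d, hg]; exact g2 A r h1 h2
  · rw [hfg c d, hg]; exact g3 A r h1 h2
  · rw [hfg c d, hg]; exact g4 A r h1 h2 h3
end

section
/- Let p be a prime and 1 ≤ b < a integers with ν_p(a-b)=0 and {ν_p(a),ν_p(b)}={0,k}. For any integer d > 0, the p-adic limit as e → ∞ of C(a·p^e, b·p^e + d) is 0 in Z_p. -/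
/-!
Since `n * C(n - 1, k - 1) = k * C(n, k)`, we have `ν_p C(n, k) ≥ ν_p n - ν_p k`. For
`n = a p^e` and `k = b p^e + d` with `e` large, `ν_p n ≥ e` while `ν_p k = ν_p d`, so
`ν_p C(a p^e, b p^e + d) → ∞`, which is convergence to `0` in `ℤ_[p]`.
-/

open Filter Topology

lemma padicValNat_le_padicValNat_choose_add {p n k : ℕ} [Fact p.Prime] (hk : k ≠ 0)
    (hkn : k ≤ n) :
    padicValNat p n ≤ padicValNat p (n.choose k) + padicValNat p k := by
  obtain ⟨n, rfl⟩ := Nat.exists_eq_add_one_of_ne_zero (by omega : n ≠ 0)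
  obtain ⟨k, rfl⟩ := Nat.exists_eq_add_one_of_ne_zero hk
  rw [← padicValNat.mul (Nat.choose_pos hkn).ne' hk, ← Nat.add_one_mul_choose_eq,
    padicValNat.mul (by omega) (Nat.choose_pos (by omega)).ne']
  omega

lemma padicValNat_mul_pow_add {p : ℕ} [hp : Fact p.Prime] (x : ℕ) {d e : ℕ} (hd : d ≠ 0)
    (he : padicValNat p d < e) :
    padicValNat p (x * p ^ e + d) = padicValNat p d := by
  obtain ⟨s, u, hu, rfl⟩ := Nat.exists_eq_pow_mul_and_not_dvd hd p hp.out.ne_one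
  have hu0 : u ≠ 0 := by rintro rfl; simp at hu
  rw [padicValNat.mul (by simp [hp.out.ne_zero]) hu0, padicValNat.prime_pow,
    padicValNat.eq_zero_of_not_dvd hu, add_zero] at he ⊢
  obtain ⟨t, rfl⟩ : ∃ t, e = s + t + 1 := ⟨e - s - 1, by omega⟩
  have hsplit : x * p ^ (s + t + 1) + p ^ s * u = p ^ s * (x * p ^ t * p + u) := by ring
  have hndvd : ¬p ∣ x * p ^ t * p + u := by
    rwa [Nat.dvd_add_right (dvd_mul_left p _)]
  rw [hsplit, padicValNat.mul (by simp [hp.out.ne_zero]) (by rintro h; simp [h] at hndvd),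
    padicValNat.prime_pow, padicValNat.eq_zero_of_not_dvd hndvd, add_zero]

namespace PadicInt

lemma norm_natCast_le_zpow_neg_padicValNat (p : ℕ) [Fact p.Prime] (n : ℕ) :
    ‖(n : ℤ_[p])‖ ≤ (p : ℝ) ^ (-(padicValNat p n : ℤ)) := by
  have h := (norm_int_le_pow_iff_dvd (p := p) (k := n) (n := padicValNat p n)).mpr
    (by exact_mod_cast pow_padicValNat_dvd)
  rwa [Int.cast_natCast] at h

lemma tendsto_natCast_zero_of_tendsto_padicValNat {p : ℕ} [hp : Fact p.Prime] {α : Type*}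
    {l : Filter α} {f : α → ℕ} (hf : Tendsto (fun x ↦ padicValNat p (f x)) l atTop) :
    Tendsto (fun x ↦ (f x : ℤ_[p])) l (𝓝 0) := by
  rw [tendsto_zero_iff_norm_tendsto_zero]
  refine squeeze_zero (fun _ ↦ norm_nonneg _)
    (fun x ↦ norm_natCast_le_zpow_neg_padicValNat p (f x)) ?_
  simp only [zpow_neg, zpow_natCast, ← inv_pow]
  exact (tendsto_pow_atTop_nhds_zero_of_lt_one (by positivity)
    (inv_lt_one_of_one_lt₀ (by exact_mod_cast hp.out.one_lt))).comp hf

end PadicInt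

theorem stmt11_general (p : ℕ) [Fact p.Prime] (a b : ℕ) (hba : b < a)
    (d : ℕ) (hd : 0 < d) :
    Filter.Tendsto (fun e : ℕ => (((a * p ^ e).choose (b * p ^ e + d) : ℕ) : ℤ_[p]))
      Filter.atTop (nhds 0) := by
  have hp : p.Prime := Fact.out
  apply PadicInt.tendsto_natCast_zero_of_tendsto_padicValNat
  refine tendsto_atTop_mono' atTop ?_ (tendsto_sub_atTop_nat (padicValNat p d))
  filter_upwards [eventually_gt_atTop (padicValNat p d), eventually_ge_atTop d] with e hde hed
  have hkn : b * p ^ e + d ≤ a * p ^ e :=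
    calc b * p ^ e + d ≤ b * p ^ e + p ^ e := by
          gcongr; exact hed.trans (Nat.lt_pow_self hp.one_lt).le
      _ = (b + 1) * p ^ e := by ring
      _ ≤ a * p ^ e := by gcongr; omega
  have hval := padicValNat_le_padicValNat_choose_add (p := p) (by omega) hkn
  rw [padicValNat_mul_pow_add b (by omega) hde,
    padicValNat.mul (by omega) (pow_ne_zero e hp.ne_zero), padicValNat.prime_pow] at hval
  omega

theorem stmt11 (p : ℕ) [Fact p.Prime] (a b k : ℕ) (hb : 1 ≤ b) (hba : b < a)
    (hab : padicValNat p (a - b) = 0)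
    (hk : ({padicValNat p a, padicValNat p b} : Set ℕ) = {0, k})
    (d : ℕ) (hd : 0 < d) :
    Filter.Tendsto (fun e : ℕ => (((a * p ^ e).choose (b * p ^ e + d) : ℕ) : ℤ_[p]))
      Filter.atTop (nhds 0) :=
  stmt11_general p a b hba d hd
end

section
/- Let p be a prime and 1 ≤ b < a integers with ν_p(a-b)=0 and {ν_p(a),ν_p(b)}={0,k}, and let m > 0 be an integer. Then the p-adic limit as e → ∞ of C(a·p^e - m, b·p^e) exists and equals ((a-b)/a) · lim_e C(a·p^e, b·p^e), where the limit on the right exists in Z_p and the product is interpreted in Q_p, where it in fact lies in Z_p. -/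
open Polynomial Filter Nat

lemma key_dvd (p : ℕ) (hp : p.Prime) (a b e : ℕ) :
    ((p:ℤ))^(e+1) ∣ ((a * p^(e+1)).choose (b * p^(e+1)) : ℤ) - ((a * p^e).choose (b * p^e) : ℤ) := by
  haveI : Fact p.Prime := ⟨hp⟩
  have hp0 : 0 < p := hp.pos
  have h1 : ((p : ℤ[X])) ∣ ((1 + X)^p - (1 + X^p) : ℤ[X]) := by
    rw [← C_eq_natCast, C_dvd_iff_dvd_coeff]
    intro i
    rw [← ZMod.intCast_zmod_eq_zero_iff_dvd]
    have : (((1 + X)^p - (1 + X^p) : ℤ[X]).map (Int.castRingHom (ZMod p))).coeff i = 0 := by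
      have : (((1 + X)^p - (1 + X^p) : ℤ[X]).map (Int.castRingHom (ZMod p))) = 0 := by
        simp only [Polynomial.map_sub, Polynomial.map_pow, Polynomial.map_add,
          Polynomial.map_one, Polynomial.map_X]
        rw [add_pow_char, one_pow, sub_self]
      rw [this, coeff_zero]
    rwa [coeff_map, eq_intCast] at this
  have h2 := dvd_sub_pow_of_dvd_sub h1 e
  have h3 : ((p:ℤ[X]))^(e+1) ∣ (((1 + X)^p)^(p^e))^a - ((1 + X^p)^(p^e))^a :=
    dvd_trans (by exact_mod_cast h2) (sub_dvd_pow_sub_pow _ _ a)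
  have e1 : (((1 + X : ℤ[X])^p)^(p^e))^a = (1+X)^(a * p^(e+1)) := by
    rw [← pow_mul, ← pow_mul]; ring_nf
  have e2 : (((1 + X^p : ℤ[X]))^(p^e))^a = expand ℤ p ((1+X)^(a * p^e)) := by
    rw [map_pow, map_add, map_one, expand_X, ← pow_mul]; ring_nf
  rw [e1, e2] at h3
  rw [← C_eq_natCast, ← C_pow, C_dvd_iff_dvd_coeff] at h3
  have h4 := h3 (b * p^(e+1))
  rw [coeff_sub, coeff_one_add_X_pow] at h4
  have e3 : (expand ℤ p ((1+X : ℤ[X])^(a * p^e))).coeff (b * p^(e+1)) =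
      ((a * p^e).choose (b * p^e) : ℤ) := by
    have : b * p^(e+1) = (b * p^e) * p := by ring
    rw [this, coeff_expand_mul hp0, coeff_one_add_X_pow]
  rw [e3] at h4
  exact_mod_cast h4

lemma descFac_add (n s t : ℕ) :
    n.descFactorial (s + t) = n.descFactorial s * (n - s).descFactorial t := by
  induction t with
  | zero => simp
  | succ t ih =>
      rw [← Nat.add_assoc, Nat.descFactorial_succ, Nat.descFactorial_succ, ih,
        Nat.sub_sub]
      ring

lemma choose_desc_identity (n K m : ℕ) :
    (n - m).choose K * n.descFactorial m = n.choose K * (n - K).descFactorial m := by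
  apply Nat.eq_of_mul_eq_mul_left (Nat.factorial_pos K)
  calc Nat.factorial K * ((n - m).choose K * n.descFactorial m)
      = ((n - m).descFactorial K) * n.descFactorial m := by
        simp only [Nat.descFactorial_eq_factorial_mul_choose]; ring
    _ = n.descFactorial (m + K) := by rw [descFac_add]; ring
    _ = n.descFactorial (K + m) := by rw [Nat.add_comm]
    _ = n.descFactorial K * (n - K).descFactorial m := descFac_add n K m
    _ = Nat.factorial K * (n.choose K * (n - K).descFactorial m) := by
        simp only [Nat.descFactorial_eq_factorial_mul_choose]; ring

theorem stmt12 (p : ℕ) [Fact p.Prime] (a b k m : ℕ) (hb : 1 ≤ b) (hba : b < a)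
    (hab : padicValNat p (a - b) = 0)
    (hk : ({padicValNat p a, padicValNat p b} : Set ℕ) = {0, k})
    (hm : 0 < m) :
    ∃ L L' : ℤ_[p],
      Filter.Tendsto (fun e : ℕ => (((a * p ^ e).choose (b * p ^ e) : ℕ) : ℤ_[p]))
        Filter.atTop (nhds L) ∧
      Filter.Tendsto (fun e : ℕ => (((a * p ^ e - m).choose (b * p ^ e) : ℕ) : ℤ_[p]))
        Filter.atTop (nhds L') ∧
      (a : ℤ_[p]) * L' = ((a : ℤ_[p]) - (b : ℤ_[p])) * L := by
  have hp := (Fact.out : p.Prime)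
  obtain ⟨m', rfl⟩ : ∃ m', m = m' + 1 := ⟨m - 1, by omega⟩
  set m := m' + 1
  set c := a - b with hcdef
  have hc1 : 1 ≤ c := by omega
  have hca : c + b = a := by omega
  -- the first limit L
  set u : ℕ → ℤ_[p] := fun e => (((a * p ^ e).choose (b * p ^ e) : ℕ) : ℤ_[p]) with hu
  have hcauchy : CauchySeq u := by
    apply cauchySeq_of_le_geometric (r := (p:ℝ)⁻¹) (C := 1)
    · rw [inv_lt_one_iff₀]; right; exact_mod_cast hp.one_lt
    · intro n
      have hd : dist (u n) (u (n+1)) = ‖((((a * p^(n+1)).choose (b * p^(n+1)) : ℤ) - ((a * p^n).choose (b * p^n) : ℤ) : ℤ) : ℤ_[p])‖ := by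
        rw [dist_eq_norm, norm_sub_rev]
        congr 1
        push_cast [hu]
        ring
      rw [hd, one_mul]
      refine le_trans ((PadicInt.norm_int_le_pow_iff_dvd).2 (key_dvd p hp a b n)) ?_
      have h1 : ((p:ℝ))⁻¹ ^ n = (p:ℝ) ^ (-(n:ℤ)) := by
        rw [inv_pow, ← zpow_natCast, ← zpow_neg]
      rw [h1]
      apply zpow_le_zpow_right₀ (by exact_mod_cast hp.one_le)
      omega
  obtain ⟨L, hL⟩ := cauchySeq_tendsto_of_complete hcauchy
  -- second sequence
  set v : ℕ → ℤ_[p] := fun e => (((a * p ^ e - m).choose (b * p ^ e) : ℕ) : ℤ_[p]) with hv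
  -- analysis in ℚ_[p]
  set G : ℚ_[p] → ℚ_[p] := fun x => ∏ j ∈ Finset.range m', (x - (j+1)) with hG
  have hGcont : Continuous G := by
    apply continuous_finset_prod
    intro i _
    exact continuous_id.sub continuous_const
  have hG0 : G 0 ≠ 0 := by
    rw [hG]
    simp only [zero_sub]
    rw [Finset.prod_ne_zero_iff]
    intro i _
    rw [neg_ne_zero]
    exact_mod_cast (Nat.cast_add_one_ne_zero i : ((i:ℚ_[p]) + 1) ≠ 0)
  have ha0 : (a : ℚ_[p]) ≠ 0 := Nat.cast_ne_zero.2 (by omega)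
  have hp0Q : (p : ℚ_[p]) ≠ 0 := Nat.cast_ne_zero.2 hp.ne_zero
  have hpe0 : Tendsto (fun e : ℕ => ((p:ℚ_[p]))^e) atTop (nhds 0) :=
    tendsto_pow_atTop_nhds_zero_of_norm_lt_one Padic.norm_p_lt_one
  have hx : Tendsto (fun e : ℕ => ((a:ℚ_[p]) * (p:ℚ_[p])^e)) atTop (nhds 0) := by
    simpa using (tendsto_const_nhds (x := (a:ℚ_[p]))).mul hpe0
  have hy : Tendsto (fun e : ℕ => ((c:ℚ_[p]) * (p:ℚ_[p])^e)) atTop (nhds 0) := by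
    simpa using (tendsto_const_nhds (x := (c:ℚ_[p]))).mul hpe0
  -- cast of descFactorial
  have hcast : ∀ n : ℕ, m ≤ n → ((n.descFactorial m : ℕ) : ℚ_[p]) = (n:ℚ_[p]) * G (n:ℚ_[p]) := by
    intro n hn
    rw [Nat.descFactorial_eq_prod_range, Nat.cast_prod]
    have h1 : ∀ i ∈ Finset.range m, ((n - i : ℕ) : ℚ_[p]) = (n:ℚ_[p]) - i := by
      intro i hi
      rw [Finset.mem_range] at hi
      push_cast [Nat.cast_sub (by omega : i ≤ n)]
      ring
    rw [Finset.prod_congr rfl h1, Finset.prod_range_succ']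
    have h2 : ∀ x ∈ Finset.range m', ((n:ℚ_[p]) - ((x+1 : ℕ):ℚ_[p])) = (n:ℚ_[p]) - ((x:ℚ_[p])+1) :=
      fun x _ => by push_cast; ring
    rw [Finset.prod_congr rfl h2]
    simp only [hG, Nat.cast_zero, sub_zero]
    ring
  -- eventual identity
  have hEv : ∀ᶠ e : ℕ in atTop, (v e : ℚ_[p]) * ((a:ℚ_[p]) * G ((a:ℚ_[p]) * (p:ℚ_[p])^e))
      = (u e : ℚ_[p]) * ((c:ℚ_[p]) * G ((c:ℚ_[p]) * (p:ℚ_[p])^e)) := by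
    rw [eventually_atTop]
    refine ⟨m, fun e he => ?_⟩
    have hpe : m ≤ p ^ e := le_trans (le_trans he (Nat.lt_two_pow_self (n := e)).le)
      (Nat.pow_le_pow_left hp.two_le e)
    have hmn : m ≤ a * p ^ e := le_trans hpe (Nat.le_mul_of_pos_left _ (by omega))
    have hmc : m ≤ c * p ^ e := le_trans hpe (Nat.le_mul_of_pos_left _ (by omega))
    have hnK : a * p ^ e - b * p ^ e = c * p ^ e := by
      rw [hcdef, Nat.sub_mul]
    have idN := choose_desc_identity (a * p ^ e) (b * p ^ e) m
    rw [hnK] at idN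
    have idQ : (v e : ℚ_[p]) * (((a * p ^ e).descFactorial m : ℕ) : ℚ_[p])
        = (u e : ℚ_[p]) * (((c * p ^ e).descFactorial m : ℕ) : ℚ_[p]) := by
      rw [hu, hv]
      push_cast
      exact_mod_cast congrArg (fun t : ℕ => (t : ℚ_[p])) idN
    rw [hcast _ hmn, hcast _ hmc] at idQ
    push_cast at idQ ⊢
    apply mul_left_cancel₀ (pow_ne_zero e hp0Q)
    linear_combination idQ
  -- limits of numerator and denominator
  have hLQ : Tendsto (fun e => (u e : ℚ_[p])) atTop (nhds (L : ℚ_[p])) :=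
    (continuous_subtype_val.tendsto L).comp hL
  have hdenT : Tendsto (fun e : ℕ => (a:ℚ_[p]) * G ((a:ℚ_[p]) * (p:ℚ_[p])^e)) atTop
      (nhds ((a:ℚ_[p]) * G 0)) :=
    tendsto_const_nhds.mul ((hGcont.tendsto 0).comp hx)
  have hnumT : Tendsto (fun e : ℕ => (u e : ℚ_[p]) * ((c:ℚ_[p]) * G ((c:ℚ_[p]) * (p:ℚ_[p])^e)))
      atTop (nhds ((L:ℚ_[p]) * ((c:ℚ_[p]) * G 0))) :=
    hLQ.mul (tendsto_const_nhds.mul ((hGcont.tendsto 0).comp hy))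
  have hdne : (a:ℚ_[p]) * G 0 ≠ 0 := mul_ne_zero ha0 hG0
  set L'' : ℚ_[p] := ((L:ℚ_[p]) * ((c:ℚ_[p]) * G 0)) / ((a:ℚ_[p]) * G 0) with hL''
  have hvQ : Tendsto (fun e => (v e : ℚ_[p])) atTop (nhds L'') := by
    refine (hnumT.div hdenT hdne).congr' ?_
    have hdenNZ : ∀ᶠ e : ℕ in atTop, (a:ℚ_[p]) * G ((a:ℚ_[p]) * (p:ℚ_[p])^e) ≠ 0 :=
      hdenT.eventually_ne hdne
    filter_upwards [hEv, hdenNZ] with e h1 h2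
    simp only [Pi.div_apply]
    rw [div_eq_iff h2]
    exact h1.symm
  have hnormL'' : ‖L''‖ ≤ 1 := by
    refine le_of_tendsto hvQ.norm (Eventually.of_forall fun e => ?_)
    exact (v e).2
  refine ⟨L, ⟨L'', hnormL''⟩, hL, ?_, ?_⟩
  · refine (tendsto_subtype_rng (p := fun x : ℚ_[p] => ‖x‖ ≤ 1)).2 ?_
    convert hvQ using 1
  · apply Subtype.ext
    push_cast
    show (a:ℚ_[p]) * L'' = ((a:ℚ_[p]) - b) * L
    rw [hL'']
    have hcQ : (a:ℚ_[p]) - (b:ℚ_[p]) = (c:ℚ_[p]) := by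
      rw [hcdef]
      push_cast [Nat.cast_sub hba.le]
      ring
    rw [hcQ]
    field_simp
end

section
/- Let p be a prime and 1 ≤ b < a integers with ν_p(a-b)=0 and {ν_p(a),ν_p(b)}={0,k}, and let c, d be integers. Then the p-adic limit L(c,d) := lim_{e→∞} C(a·p^e + c, b·p^e + d) exists in Z_p and equals: L(0,0)·C(c,d) if c,d ≥ 0; L(0,0)·C(c,d)·(a-b)/a if c < 0 ≤ d; L(0,0)·C(c,c-d)·b/a if c < 0 ≤ c-d; and 0 otherwise. Here C(c,d) = c(c-1)···(c-d+1)/d! for d ≥ 0. -/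
/-!
Write `x = p^e`, so that `x → 0` in `ℚ_p`. Removing the `p`-power factors from
`(p(k+m))! / (pk)!` and `(pm)!` shows `C(p(k+m), pm) ≡ C(k+m, m) mod p·p^{ν_p(k)}`, which makes
`C(a p^e, b p^e)` Cauchy. For the shifted coefficients, write `C(ax + c, bx + d)` as
`C(ax, bx)` times three ratios `(n + t)! / n!` with `n ∈ {ax, bx, (a-b)x}`. Each ratio is a
polynomial in `n` when `t ≥ 0` (tending to `t!`) and `1 / (n · polynomial)` when `t < 0`, so it
behaves like `Γ(n+t+1)/Γ(n+1)` near `n = 0`: a simple pole exactly when `t < 0`. The limit is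
nonzero iff the numerator has as many poles as the denominator, and the leading coefficients
combine into a generalized binomial coefficient.
-/

open Filter Topology Finset Polynomial
open scoped Nat

namespace Nat

theorem mul_add_one_ascFactorial_mul {p : ℕ} (hp : p ≠ 0) (k m : ℕ) :
    (p * k + 1).ascFactorial (p * m) =
      p ^ m * (k + 1).ascFactorial m * ∏ q ∈ range m, (p * (k + q) + 1).ascFactorial (p - 1) := by
  induction m with
  | zero => simp
  | succ m ih =>
    have hblock : (p * (k + m) + 1).ascFactorial p =
        p * (k + m + 1) * (p * (k + m) + 1).ascFactorial (p - 1) := by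
      obtain ⟨r, rfl⟩ : ∃ r, p = r + 1 := ⟨p - 1, by omega⟩
      rw [ascFactorial_succ, Nat.add_sub_cancel]
      ring
    rw [mul_add, mul_one, ← ascFactorial_mul_ascFactorial, ih,
      show p * k + 1 + p * m = p * (k + m) + 1 by ring, hblock, prod_range_succ, ascFactorial_succ]
    ring

theorem Prime.coprime_mul_add_one_ascFactorial {p : ℕ} (hp : p.Prime) (q : ℕ) :
    p.Coprime ((p * q + 1).ascFactorial (p - 1)) := by
  rw [ascFactorial_eq_prod_range]
  refine Coprime.prod_right fun i hi => hp.coprime_iff_not_dvd.mpr ?_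
  rw [mem_range] at hi
  rw [add_assoc, Nat.dvd_add_right (dvd_mul_right p q)]
  exact not_dvd_of_pos_of_lt (by omega) (by omega)

theorem choose_mul_prime_modEq {p : ℕ} (hp : p.Prime) {j k : ℕ} (hk : p ^ j ∣ k) (m : ℕ) :
    (p * (k + m)).choose (p * m) ≡ (k + m).choose m [MOD p ^ (j + 1)] := by
  set G : ℕ → ℕ := fun k => ∏ q ∈ range m, (p * (k + q) + 1).ascFactorial (p - 1) with hG
  have hsplit := mul_add_one_ascFactorial_mul hp.ne_zero
  have hG0 : (p * m)! = p ^ m * m ! * G 0 := by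
    simpa [hG, one_ascFactorial] using hsplit 0 m
  have hcancel : G 0 * (p * (k + m)).choose (p * m) = (k + m).choose m * G k := by
    have h := hsplit k m
    rw [ascFactorial_eq_factorial_mul_choose, ascFactorial_eq_factorial_mul_choose, hG0,
      ← mul_add] at h
    refine Nat.eq_of_mul_eq_mul_left (Nat.mul_pos (pow_pos hp.pos m) m.factorial_pos) ?_
    rw [← mul_assoc, h]
    ring
  have hGk : (G k : ZMod (p ^ (j + 1))) = G 0 := by
    have hpk : ((p * k : ℕ) : ZMod (p ^ (j + 1))) = 0 := by
      rw [ZMod.natCast_eq_zero_iff, pow_succ, mul_comm]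
      exact mul_dvd_mul_left p hk
    simp only [hG, cast_prod, ← ascPochhammer_nat_eq_natCast_ascFactorial]
    push_cast at hpk ⊢
    simp [mul_add, hpk]
  have hunit : IsUnit (G 0 : ZMod (p ^ (j + 1))) := by
    rw [ZMod.isUnit_iff_coprime]
    exact Coprime.pow_right _ (Coprime.prod_left fun q _ => by
      simpa using (hp.coprime_mul_add_one_ascFactorial q).symm)
  rw [← ZMod.natCast_eq_natCast_iff]
  apply hunit.mul_left_cancel
  have h := congrArg (Nat.cast : ℕ → ZMod (p ^ (j + 1))) hcancel
  push_cast at h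
  rw [h, hGk, mul_comm]

theorem choose_mul_pow_succ_modEq {p : ℕ} (hp : p.Prime) {a b : ℕ} (hba : b ≤ a) (e : ℕ) :
    (a * p ^ (e + 1)).choose (b * p ^ (e + 1)) ≡ (a * p ^ e).choose (b * p ^ e)
      [MOD p ^ (e + 1)] := by
  have h := choose_mul_prime_modEq hp (dvd_mul_left (p ^ e) (a - b)) (b * p ^ e)
  rw [← add_mul, Nat.sub_add_cancel hba] at h
  convert h using 2 <;> ring

end Nat

namespace PadicInt

variable {p : ℕ} [Fact p.Prime]

theorem exists_tendsto_choose_mul_pow (a b : ℕ) (hba : b ≤ a) :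
    ∃ L : ℤ_[p], Tendsto (fun e : ℕ => ((a * p ^ e).choose (b * p ^ e) : ℤ_[p])) atTop (𝓝 L) := by
  refine cauchySeq_tendsto_of_complete
    (NonarchimedeanAddGroup.cauchySeq_of_tendsto_sub_nhds_zero ?_)
  have hp : ‖(p : ℤ_[p])‖ < 1 := (norm_lt_one_iff_dvd _).2 dvd_rfl
  refine squeeze_zero_norm (fun e => ?_)
    ((tendsto_pow_atTop_nhds_zero_of_lt_one (norm_nonneg _) hp).comp (tendsto_add_atTop_nat 1))
  obtain ⟨q, hq⟩ := (Nat.choose_mul_pow_succ_modEq (Fact.out : p.Prime) hba e).symm.dvd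
  have h : ((a * p ^ (e + 1)).choose (b * p ^ (e + 1)) : ℤ_[p]) - (a * p ^ e).choose (b * p ^ e) =
      (p : ℤ_[p]) ^ (e + 1) * q := by exact_mod_cast hq
  rw [h, Function.comp_apply, norm_mul, norm_pow]
  exact mul_le_of_le_one_right (by positivity) (norm_le_one _)

theorem exists_tendsto_of_tendsto_coe {ι : Type*} {l : Filter ι} [l.NeBot] {f : ι → ℤ_[p]}
    {y : ℚ_[p]} (h : Tendsto (fun i => (f i : ℚ_[p])) l (𝓝 y)) :
    ∃ L : ℤ_[p], (L : ℚ_[p]) = y ∧ Tendsto f l (𝓝 L) :=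
  ⟨⟨y, le_of_tendsto h.norm (Eventually.of_forall fun i => (f i).2)⟩, rfl, tendsto_subtype_rng.2 h⟩

end PadicInt

theorem genChoose_eq_ringChoose (c : ℤ) (k : ℕ) : genChoose c k = Ring.choose c k := by
  have h := Ring.descPochhammer_eq_factorial_smul_choose c k
  rw [← Polynomial.eval_eq_smeval, descPochhammer_eval_eq_prod_range, nsmul_eq_mul] at h
  rw [genChoose, h, Int.mul_ediv_cancel_left _ (by positivity)]

theorem genChoose_natCast (n k : ℕ) : genChoose n k = n.choose k := by
  rw [genChoose_eq_ringChoose, Ring.choose_natCast]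

theorem genChoose_neg_natCast_sub_one (m k : ℕ) :
    genChoose (-(m + 1)) k = (-1) ^ k * (m + k).choose k := by
  rw [genChoose_eq_ringChoose, Ring.choose_neg,
    show (m : ℤ) + 1 + k - 1 = (m + k : ℕ) by push_cast; ring, Ring.choose_natCast,
    Units.smul_def, Int.coe_negOnePow_natCast, smul_eq_mul]

theorem descPochhammer_eval_neg_one (R : Type*) [Ring R] (m : ℕ) :
    (descPochhammer R m).eval (-1) = (-1) ^ m * m ! := by
  have h := ascPochhammer_eval_neg_eq_descPochhammer R (-1 : R) m
  rw [neg_neg, ascPochhammer_eval_one] at h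
  rw [h, ← mul_assoc, ← pow_add, ← two_mul, pow_mul, neg_one_sq, one_pow, one_mul]

def factorialRatio (K : Type*) [Field K] (n : ℕ) (t : ℤ) : K := ((n + t).toNat ! : K) / n !

/-- As `n → 0`, `factorialRatio K n t = Γ(n+t+1)/Γ(n+1)` has a pole of this order. -/
def factorialRatioOrder (t : ℤ) : ℕ := if t < 0 then 1 else 0

/-- The leading coefficient of `Γ(n+t+1)/Γ(n+1)` at `n = 0`: the value `t!` for `t ≥ 0`, and
the residue `(-1)^m / m!` of `Γ` at `-m` for `t = -m-1`. -/
def factorialRatioCoeff (K : Type*) [Field K] (t : ℤ) : K :=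
  if 0 ≤ t then (t.toNat ! : K) else (-1) ^ (-t - 1).toNat / ((-t - 1).toNat ! : K)

section FactorialRatio

variable {K : Type*} [Field K]

theorem factorialRatioCoeff_natCast (n : ℕ) : factorialRatioCoeff K n = n ! := by
  simp [factorialRatioCoeff]

theorem factorialRatioCoeff_neg_natCast_sub_one (m : ℕ) :
    factorialRatioCoeff K (-(m + 1)) = (-1) ^ m / m ! := by
  rw [factorialRatioCoeff, if_neg (by omega), show (-(-((m : ℤ) + 1)) - 1).toNat = m by omega]

variable [CharZero K]

theorem factorialRatioCoeff_ne_zero (t : ℤ) : factorialRatioCoeff K t ≠ 0 := by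
  unfold factorialRatioCoeff
  split_ifs <;> simp [Nat.factorial_ne_zero]

theorem factorialRatioCoeff_div_eq_genChoose (c : ℤ) (k : ℕ) (hk : 0 ≤ c → (k : ℤ) ≤ c) :
    factorialRatioCoeff K c / (factorialRatioCoeff K k * factorialRatioCoeff K (c - k)) =
      genChoose c k := by
  have hf : ∀ n : ℕ, (n ! : K) ≠ 0 := fun n => Nat.cast_ne_zero.2 (Nat.factorial_ne_zero n)
  rcases le_or_gt 0 c with hc | hc
  · lift c to ℕ using hc
    have hkc : k ≤ c := by exact_mod_cast hk (Int.natCast_nonneg c)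
    rw [← Nat.cast_sub hkc, factorialRatioCoeff_natCast, factorialRatioCoeff_natCast,
      factorialRatioCoeff_natCast, genChoose_natCast, Int.cast_natCast, Nat.cast_choose K hkc]
  · obtain ⟨m, rfl⟩ : ∃ m : ℕ, c = -(m + 1) := ⟨(-c - 1).toNat, by omega⟩
    rw [show -((m : ℤ) + 1) - k = -((m + k : ℕ) + 1) by push_cast; ring,
      factorialRatioCoeff_neg_natCast_sub_one, factorialRatioCoeff_neg_natCast_sub_one,
      factorialRatioCoeff_natCast, genChoose_neg_natCast_sub_one]
    push_cast
    rw [Nat.cast_choose K (Nat.le_add_left k m), Nat.add_sub_cancel, pow_add]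
    field_simp
    rw [← pow_mul, mul_comm k, pow_mul, neg_one_sq, one_pow, one_mul]

theorem cast_choose_toNat_add {m n : ℕ} (hmn : m ≤ n) {c d : ℤ} (hd : 0 ≤ (m : ℤ) + d)
    (hcd : 0 ≤ ((n - m : ℕ) : ℤ) + (c - d)) :
    (((n + c).toNat.choose (m + d).toNat : ℕ) : K) =
      n.choose m *
        (factorialRatio K n c / (factorialRatio K m d * factorialRatio K (n - m) (c - d))) := by
  have hf : ∀ n : ℕ, (n ! : K) ≠ 0 := fun n => Nat.cast_ne_zero.2 (Nat.factorial_ne_zero n)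
  rw [Nat.cast_choose K (by omega), Nat.cast_choose K hmn, factorialRatio, factorialRatio,
    factorialRatio, show (n + c).toNat - (m + d).toNat = ((n - m : ℕ) + (c - d)).toNat by omega]
  field_simp [hf n, hf m, hf (n - m)]

end FactorialRatio

section Limits

variable {K : Type*} [NormedField K] [CharZero K] {ι : Type*} {l : Filter ι}

theorem tendsto_factorialRatio_mul_pow {n : ι → ℕ} (h0 : Tendsto (fun i => (n i : K)) l (𝓝 0))
    (htop : Tendsto n l atTop) (t : ℤ) :
    Tendsto (fun i => factorialRatio K (n i) t * (n i : K) ^ factorialRatioOrder t) l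
      (𝓝 (factorialRatioCoeff K t)) := by
  rcases le_or_gt 0 t with ht | ht
  · lift t to ℕ using ht
    have hfac : ∀ i, ((n i)! : K) ≠ 0 := fun i => Nat.cast_ne_zero.2 (Nat.factorial_ne_zero _)
    have hval : ∀ i, factorialRatio K (n i) t * (n i : K) ^ factorialRatioOrder t =
        (ascPochhammer K t).eval ((n i : K) + 1) := fun i => by
      rw [factorialRatio, factorialRatioOrder, if_neg (by omega), pow_zero, mul_one,
        div_eq_iff (hfac i), show (n i + (t : ℤ)).toNat = n i + t by omega,
        ← factorial_mul_ascPochhammer, mul_comm]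
    simp only [hval, factorialRatioCoeff_natCast, ← ascPochhammer_eval_one]
    exact ((ascPochhammer K t).continuous.tendsto _).comp (by simpa using h0.add_const (1 : K))
  · obtain ⟨m, rfl⟩ : ∃ m : ℕ, t = -(m + 1) := ⟨(-t - 1).toNat, by omega⟩
    -- `n! / (n-m-1)! = n · D(n-1)` with `D` the descending Pochhammer polynomial of degree `m`.
    have hval : ∀ᶠ i in l, ((descPochhammer K m).eval ((n i : K) - 1))⁻¹ =
        factorialRatio K (n i) (-(m + 1)) * (n i : K) ^ factorialRatioOrder (-(m + 1)) := by
      filter_upwards [htop.eventually_ge_atTop (m + 1)] with i hi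
      have hn : (n i : K) ≠ 0 := Nat.cast_ne_zero.2 (by omega)
      have hf : ((n i - (m + 1))! : K) ≠ 0 := Nat.cast_ne_zero.2 (Nat.factorial_ne_zero _)
      have hdesc : ((n i).descFactorial (m + 1) : K) =
          n i * (descPochhammer K m).eval ((n i : K) - 1) := by
        rw [← descPochhammer_eval_eq_descFactorial, descPochhammer_succ_left, eval_mul, eval_X,
          eval_comp, eval_sub, eval_X, eval_one]
      rw [factorialRatio, factorialRatioOrder, if_pos (by omega), pow_one,
        show (n i + -((m : ℤ) + 1)).toNat = n i - (m + 1) by omega,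
        ← Nat.factorial_mul_descFactorial hi, Nat.cast_mul, hdesc]
      field_simp
    have hD : (descPochhammer K m).eval (-1) ≠ 0 := by
      rw [descPochhammer_eval_neg_one]; simp [Nat.factorial_ne_zero]
    have hlim := (((descPochhammer K m).continuous.tendsto (-1)).comp
      (by simpa using h0.sub_const (1 : K))).inv₀ hD
    rw [factorialRatioCoeff_neg_natCast_sub_one]
    rw [descPochhammer_eval_neg_one, mul_inv, ← inv_pow, inv_neg_one, ← div_eq_mul_inv] at hlim
    exact hlim.congr' hval

/-- The limit of `C(ax + c, bx + d) / C(ax, bx)` as the natural number `x` tends to `0` in `K`;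
the factor `0 ^ _` vanishes exactly when the denominator has more poles than the numerator. -/
def binomShiftLimit (K : Type*) [Field K] (a b : ℕ) (c d : ℤ) : K :=
  factorialRatioCoeff K c / (factorialRatioCoeff K d * factorialRatioCoeff K (c - d)) *
    ((b : K) ^ factorialRatioOrder d * ((a : K) - b) ^ factorialRatioOrder (c - d) /
      (a : K) ^ factorialRatioOrder c *
    0 ^ (factorialRatioOrder d + factorialRatioOrder (c - d) - factorialRatioOrder c))

theorem tendsto_cast_choose_toNat_add {x : ι → ℕ} (h0 : Tendsto (fun i => (x i : K)) l (𝓝 0))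
    (htop : Tendsto x l atTop) {a b : ℕ} (hb : b ≠ 0) (hba : b < a) {L0 : K}
    (hL0 : Tendsto (fun i => ((a * x i).choose (b * x i) : K)) l (𝓝 L0)) (c d : ℤ) :
    Tendsto (fun i => ((((a : ℤ) * x i + c).toNat.choose ((b : ℤ) * x i + d).toNat : ℕ) : K)) l
      (𝓝 (L0 * binomShiftLimit K a b c d)) := by
  set o := factorialRatioOrder
  set A : ℕ → ℤ → ι → K := fun α t i => factorialRatio K (α * x i) t * ((α * x i : ℕ) : K) ^ o t
  set W : ι → K := fun i => ((b * x i : ℕ) : K) ^ o d * (((a - b) * x i : ℕ) : K) ^ o (c - d) /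
    ((a * x i : ℕ) : K) ^ o c
  set w : K := (b : K) ^ o d * ((a : K) - b) ^ o (c - d) / (a : K) ^ o c
  have hA : ∀ α ≠ 0, ∀ t, Tendsto (A α t) l (𝓝 (factorialRatioCoeff K t)) := fun α hα t =>
    tendsto_factorialRatio_mul_pow (by simpa using h0.const_mul (α : K))
      (tendsto_atTop_mono (fun i => Nat.le_mul_of_pos_left _ (Nat.pos_of_ne_zero hα)) htop) t
  have hW : Tendsto W l (𝓝 (w * 0 ^ (o d + o (c - d) - o c))) := by
    obtain ⟨s, hs⟩ : ∃ s, o d + o (c - d) = o c + s :=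
      Nat.exists_eq_add_of_le (by simp only [o, factorialRatioOrder]; split_ifs <;> omega)
    refine (tendsto_const_nhds.mul (h0.pow _)).congr' ?_
    filter_upwards [htop.eventually_gt_atTop 0] with i hi
    have hx : (x i : K) ≠ 0 := Nat.cast_ne_zero.2 hi.ne'
    calc w * (x i : K) ^ (o d + o (c - d) - o c)
        = w * ((x i : K) ^ (o d + o (c - d)) / (x i : K) ^ o c) := by
          rw [hs, Nat.add_sub_cancel_left, pow_add, mul_div_cancel_left₀ _ (pow_ne_zero _ hx)]
      _ = W i := by
          simp only [w, W, Nat.cast_mul, Nat.cast_sub hba.le, mul_pow]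
          ring
  have hkey : ∀ᶠ i in l,
      ((a * x i).choose (b * x i) : K) * (A a c i / (A b d i * A (a - b) (c - d) i)) * W i =
        ((((a : ℤ) * x i + c).toNat.choose ((b : ℤ) * x i + d).toNat : ℕ) : K) := by
    filter_upwards [htop.eventually_ge_atTop (c.natAbs + d.natAbs + 1)] with i hi
    have hbx : x i ≤ b * x i := Nat.le_mul_of_pos_left _ (Nat.pos_of_ne_zero hb)
    have habx : x i ≤ (a - b) * x i := Nat.le_mul_of_pos_left _ (Nat.sub_pos_of_lt hba)
    have hsub : a * x i - b * x i = (a - b) * x i := (Nat.sub_mul _ _ _).symm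
    have h := cast_choose_toNat_add (K := K) (m := b * x i) (n := a * x i)
      (Nat.mul_le_mul_right _ hba.le) (c := c) (d := d) (by omega) (by rw [hsub]; omega)
    rw [hsub] at h
    simp only [Nat.cast_mul] at h
    have hN : ((a * x i : ℕ) : K) ≠ 0 := Nat.cast_ne_zero.2 (Nat.mul_ne_zero (by omega) (by omega))
    have hM : ((b * x i : ℕ) : K) ≠ 0 := Nat.cast_ne_zero.2 (Nat.mul_ne_zero hb (by omega))
    have hK : (((a - b) * x i : ℕ) : K) ≠ 0 :=
      Nat.cast_ne_zero.2 (Nat.mul_ne_zero (by omega) (by omega))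
    rw [h]
    simp only [A, W]
    field_simp
  have hlim := ((hL0.mul ((hA a (by omega) c).div ((hA b hb d).mul (hA (a - b) (by omega) (c - d)))
    (mul_ne_zero (factorialRatioCoeff_ne_zero _) (factorialRatioCoeff_ne_zero _)))).mul hW).congr'
      hkey
  rwa [mul_assoc] at hlim

end Limits

section BinomShiftLimit

variable {K : Type*} [Field K] (a b : ℕ) {c d : ℤ}

theorem binomShiftLimit_eq_zero
    (h : factorialRatioOrder c < factorialRatioOrder d + factorialRatioOrder (c - d)) :
    binomShiftLimit K a b c d = 0 := by
  rw [binomShiftLimit, zero_pow (by omega), mul_zero, mul_zero]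

variable [CharZero K]

theorem binomShiftLimit_of_nonneg (hc : 0 ≤ c) (hd : 0 ≤ d) :
    binomShiftLimit K a b c d = genChoose c d.toNat := by
  rcases le_or_gt d c with hdc | hdc
  · have h := factorialRatioCoeff_div_eq_genChoose (K := K) c d.toNat (fun _ => by omega)
    rw [Int.toNat_of_nonneg hd] at h
    simp [binomShiftLimit, factorialRatioOrder, h, hc.not_gt, hd.not_gt, not_lt.2 hdc]
  · rw [binomShiftLimit_eq_zero a b (by simp only [factorialRatioOrder]; split_ifs <;> omega)]
    lift c to ℕ using hc
    rw [genChoose_natCast, Nat.choose_eq_zero_of_lt (by omega), Nat.cast_zero, Int.cast_zero]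

theorem mul_binomShiftLimit_of_neg_of_nonneg (hc : c < 0) (hd : 0 ≤ d) (ha : (a : K) ≠ 0) :
    a * binomShiftLimit K a b c d = genChoose c d.toNat * (a - b) := by
  have h := factorialRatioCoeff_div_eq_genChoose (K := K) c d.toNat (fun _ => by omega)
  rw [Int.toNat_of_nonneg hd] at h
  simp only [binomShiftLimit, factorialRatioOrder, if_pos hc, if_neg hd.not_gt,
    if_pos (show c - d < 0 by omega), h]
  field_simp
  simp

theorem mul_binomShiftLimit_of_neg_of_sub_nonneg (hc : c < 0) (hcd : 0 ≤ c - d)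
    (ha : (a : K) ≠ 0) :
    a * binomShiftLimit K a b c d = genChoose c (c - d).toNat * b := by
  have h := factorialRatioCoeff_div_eq_genChoose (K := K) c (c - d).toNat
    (fun h => absurd h hc.not_ge)
  rw [Int.toNat_of_nonneg hcd, sub_sub_cancel, mul_comm] at h
  simp only [binomShiftLimit, factorialRatioOrder, if_pos hc, if_pos (show d < 0 by omega),
    if_neg hcd.not_gt, h]
  field_simp
  simp

end BinomShiftLimit

theorem stmt14_general (p : ℕ) [Fact p.Prime] (a b : ℕ) (hb : 1 ≤ b) (hba : b < a)
    (c d : ℤ) :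
    ∃ L0 L : ℤ_[p],
      Filter.Tendsto (fun e : ℕ => (((a * p ^ e).choose (b * p ^ e) : ℕ) : ℤ_[p]))
        Filter.atTop (nhds L0) ∧
      Filter.Tendsto
        (fun e : ℕ =>
          (((((a : ℤ) * (p : ℤ) ^ e + c).toNat).choose (((b : ℤ) * (p : ℤ) ^ e + d).toNat) : ℕ)
            : ℤ_[p]))
        Filter.atTop (nhds L) ∧
      ((0 ≤ c → 0 ≤ d → L = L0 * (genChoose c d.toNat : ℤ_[p])) ∧
       (c < 0 → 0 ≤ d →
         (a : ℤ_[p]) * L = L0 * (genChoose c d.toNat : ℤ_[p]) * ((a : ℤ_[p]) - (b : ℤ_[p]))) ∧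
       (c < 0 → 0 ≤ c - d →
         (a : ℤ_[p]) * L = L0 * (genChoose c (c - d).toNat : ℤ_[p]) * (b : ℤ_[p])) ∧
       (¬ (0 ≤ c ∧ 0 ≤ d) → ¬ (c < 0 ∧ 0 ≤ d) → ¬ (c < 0 ∧ 0 ≤ c - d) → L = 0)) := by
  obtain ⟨L0, hL0⟩ := PadicInt.exists_tendsto_choose_mul_pow (p := p) a b hba.le
  have hx0 : Tendsto (fun e : ℕ => ((p ^ e : ℕ) : ℚ_[p])) atTop (𝓝 0) := by
    simpa using tendsto_pow_atTop_nhds_zero_of_norm_lt_one Padic.norm_p_lt_one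
  have hlim := tendsto_cast_choose_toNat_add hx0
    (tendsto_pow_atTop_atTop_of_one_lt (Fact.out : p.Prime).one_lt) (by omega) hba
    (tendsto_subtype_rng.1 hL0) c d
  simp only [Nat.cast_pow] at hlim
  obtain ⟨L, hLval, hL⟩ := PadicInt.exists_tendsto_of_tendsto_coe (f := fun e =>
    (((((a : ℤ) * (p : ℤ) ^ e + c).toNat).choose (((b : ℤ) * (p : ℤ) ^ e + d).toNat) : ℕ)
      : ℤ_[p])) hlim
  have ha : (a : ℚ_[p]) ≠ 0 := Nat.cast_ne_zero.2 (by omega)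
  refine ⟨L0, L, hL0, hL, fun hc hd => ?_, fun hc hd => ?_, fun hc hcd => ?_, fun h1 h2 h3 => ?_⟩
    <;> apply Subtype.ext <;> push_cast <;> rw [hLval]
  · rw [binomShiftLimit_of_nonneg a b hc hd]
  · linear_combination (L0 : ℚ_[p]) * mul_binomShiftLimit_of_neg_of_nonneg a b hc hd ha
  · linear_combination (L0 : ℚ_[p]) * mul_binomShiftLimit_of_neg_of_sub_nonneg a b hc hcd ha
  · rw [binomShiftLimit_eq_zero a b (by simp only [factorialRatioOrder]; split_ifs <;> omega),
      mul_zero]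

theorem stmt14 (p : ℕ) [Fact p.Prime] (a b k : ℕ) (hb : 1 ≤ b) (hba : b < a)
    (hab : padicValNat p (a - b) = 0)
    (hk : ({padicValNat p a, padicValNat p b} : Set ℕ) = {0, k})
    (c d : ℤ) :
    ∃ L0 L : ℤ_[p],
      Filter.Tendsto (fun e : ℕ => (((a * p ^ e).choose (b * p ^ e) : ℕ) : ℤ_[p]))
        Filter.atTop (nhds L0) ∧
      Filter.Tendsto
        (fun e : ℕ =>
          (((((a : ℤ) * (p : ℤ) ^ e + c).toNat).choose (((b : ℤ) * (p : ℤ) ^ e + d).toNat) : ℕ)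
            : ℤ_[p]))
        Filter.atTop (nhds L) ∧
      ((0 ≤ c → 0 ≤ d → L = L0 * (genChoose c d.toNat : ℤ_[p])) ∧
       (c < 0 → 0 ≤ d →
         (a : ℤ_[p]) * L = L0 * (genChoose c d.toNat : ℤ_[p]) * ((a : ℤ_[p]) - (b : ℤ_[p]))) ∧
       (c < 0 → 0 ≤ c - d →
         (a : ℤ_[p]) * L = L0 * (genChoose c (c - d).toNat : ℤ_[p]) * (b : ℤ_[p])) ∧
       (¬ (0 ≤ c ∧ 0 ≤ d) → ¬ (c < 0 ∧ 0 ≤ d) → ¬ (c < 0 ∧ 0 ≤ c - d) → L = 0)) :=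
  stmt14_general p a b hb hba c d
end

section
/- Let p be a prime, a > b ≥ 1 with ν_p(a-b) = 0 = ν_p(b), and d ≥ 1. Then there is a constant K (depending on a, b, d but not on e) such that ν_p(C(a·p^e, b·p^e + d)) ≥ e - K for all sufficiently large e; in particular ν_p(C(a·p^e, b·p^e + d)) → ∞ as e → ∞. -/
theorem stmt16 (p : ℕ) (hp : p.Prime) (a b d : ℕ) (hb : 1 ≤ b) (hba : b < a)
    (hab : padicValNat p (a - b) = 0) (hbu : padicValNat p b = 0) (hd : 1 ≤ d) :
    ∃ K : ℕ, ∃ E : ℕ, ∀ e ≥ E,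
      e ≤ padicValNat p ((a * p ^ e).choose (b * p ^ e + d)) + K := by
  haveI : Fact p.Prime := ⟨hp⟩
  refine ⟨padicValNat p d, max (padicValNat p d + 1) d, fun e he => ?_⟩
  have he1 : padicValNat p d + 1 ≤ e := le_trans (le_max_left _ _) he
  have he2 : d ≤ e := le_trans (le_max_right _ _) he
  set N := a * p ^ e with hN
  set M := b * p ^ e + d with hM
  have hp2 : 2 ≤ p := hp.two_le
  have hpe : d ≤ p ^ e := by
    calc d ≤ 2 ^ d := (Nat.lt_two_pow_self (n := d)).le
    _ ≤ 2 ^ e := Nat.pow_le_pow_right (by norm_num) he2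
    _ ≤ p ^ e := Nat.pow_le_pow_left hp2 e
  have hMN : M ≤ N := by
    have : M ≤ (b + 1) * p ^ e := by
      rw [add_mul, one_mul]; exact Nat.add_le_add_left hpe _
    exact le_trans this (Nat.mul_le_mul_right _ hba)
  have hpe0 : 0 < p ^ e := Nat.pow_pos (n := e) (lt_of_lt_of_le (by norm_num) hp2)
  have hN0 : N ≠ 0 := Nat.mul_ne_zero (by omega) (by omega)
  have hM0 : M ≠ 0 := by positivity
  have hc0 : N.choose M ≠ 0 := (Nat.choose_pos hMN).ne'
  have hc0' : (N - 1).choose (M - 1) ≠ 0 :=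
    (Nat.choose_pos (by omega)).ne'
  -- key identity
  have hid : N * (N - 1).choose (M - 1) = N.choose M * M := by
    have := Nat.add_one_mul_choose_eq (N - 1) (M - 1)
    have h1 : N - 1 + 1 = N := by omega
    have h2 : M - 1 + 1 = M := by omega
    rwa [h1, h2] at this
  have hval : padicValNat p N + padicValNat p ((N - 1).choose (M - 1)) =
      padicValNat p (N.choose M) + padicValNat p M := by
    rw [← padicValNat.mul hN0 hc0', ← padicValNat.mul hc0 hM0, hid]
  -- valuation of N is at least e
  have hvN : e ≤ padicValNat p N := by
    rw [hN, padicValNat.mul (by omega) (by omega), padicValNat.prime_pow]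
    omega
  -- valuation of M is at most ν_p d
  have hvM : padicValNat p M ≤ padicValNat p d := by
    by_contra h
    push_neg at h
    have hdvd : p ^ (padicValNat p d + 1) ∣ M :=
      (padicValNat_dvd_iff_le hM0).mpr h
    have hdvd1 : p ^ (padicValNat p d + 1) ∣ b * p ^ e :=
      Dvd.dvd.mul_left (pow_dvd_pow p he1) b
    have hdvd2 : p ^ (padicValNat p d + 1) ∣ d := (Nat.dvd_add_right hdvd1).mp hdvd
    have := (padicValNat_dvd_iff_le (by omega : d ≠ 0)).mp hdvd2
    omega
  omega
end
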